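/- arXiv:2102.02118 — 12 statements merged into one kernel-verified Lean document; each statement's English description precedes it below -/
import Mathlib

section
/- Let L be the Laplacian matrix of a nonnegative weighted directed graph on L nodes, partitioned into N×N blocks L_{ij} according to a clustering C = {C_1,...,C_N} of the node set, where each block L_{ij} has constant row sums β_{ij} (i.e., L_{ij}·1 = β_{ij}·1). Then L is similar (via an explicit invertible transformation followed by a permutation) to a block upper-triangular matrix whose top-left N×N block is the quotient Laplacian L_G = [β_{ij}] and whose bottom-right (L−N)×(L−N) block is the matrix L̂ formed by the blocks L̂_{ij} = L̃_{ij} − 1·γ_{ij}^T, where L̃_{ij} deletes the first row and column indices of each cluster and γ_{ij} is the first row of L_{ij} with its first entry removed. Consequently, the spectrum of L (with multiplicity) is the union of the spectra of L_G and L̂. -/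
/-!
Take as new basis, for each cluster `j`, the indicator vector of `C_j` in place of the first
basis vector of `C_j`. Constant block row sums say exactly that
`ℒ 1_{C_j} = ∑_i β_{ij} 1_{C_i}`, so the indicators span an invariant subspace on which `ℒ`
acts by `L_G`. The inverse change of basis subtracts the first row of each cluster from its
other rows, which computes the induced action on the quotient space: `L̂`. After moving the
first nodes to the front, the conjugated matrix is block upper triangular, and its
characteristic polynomial factors.
-/

open Matrix

theorem Matrix.charpoly_conj_of_mul_eq_one {m R : Type*} [Fintype m] [DecidableEq m]
    [CommRing R] {P Q : Matrix m m R} (h : P * Q = 1) (A : Matrix m m R) :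
    (P * A * Q).charpoly = A.charpoly := by
  rw [charpoly_mul_comm, ← mul_assoc, mul_eq_one_comm.mp h, one_mul]

namespace ClusterReduction

variable {ι : Type*} [Fintype ι] [DecidableEq ι] {n : ι → ℕ} {R : Type*} [CommRing R]

variable (n R) in
def clusterBasis : Matrix ((i : ι) × Fin (n i + 1)) ((i : ι) × Fin (n i + 1)) R :=
  fun v u => if u.2 = 0 then (if v.1 = u.1 then 1 else 0) else (if v = u then 1 else 0)

variable (n R) in
def clusterBasisInv : Matrix ((i : ι) × Fin (n i + 1)) ((i : ι) × Fin (n i + 1)) R :=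
  fun v u => (if v = u then 1 else 0) - (if v.2 ≠ 0 ∧ u = ⟨v.1, 0⟩ then 1 else 0)

theorem mul_clusterBasis_apply
    (A : Matrix ((i : ι) × Fin (n i + 1)) ((i : ι) × Fin (n i + 1)) R)
    (v : (i : ι) × Fin (n i + 1)) (j : ι) (c : Fin (n j + 1)) :
    (A * clusterBasis n R) v ⟨j, c⟩ = if c = 0 then ∑ b, A v ⟨j, b⟩ else A v ⟨j, c⟩ := by
  rw [mul_apply]
  split_ifs with hc
  · subst hc
    rw [Fintype.sum_sigma, Finset.sum_eq_single j (fun k _ hk => by simp [clusterBasis, hk])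
      (by simp)]
    simp [clusterBasis]
  · simp [clusterBasis, hc]

theorem clusterBasisInv_mul_apply
    (A : Matrix ((i : ι) × Fin (n i + 1)) ((i : ι) × Fin (n i + 1)) R)
    (v u : (i : ι) × Fin (n i + 1)) :
    (clusterBasisInv n R * A) v u = if v.2 = 0 then A v u else A v u - A ⟨v.1, 0⟩ u := by
  rw [mul_apply]
  split_ifs with hv
  · simp [clusterBasisInv, hv]
  · simp [clusterBasisInv, hv, sub_mul, Finset.sum_sub_distrib]

theorem clusterBasisInv_mul_clusterBasis :
    clusterBasisInv n R * clusterBasis n R = 1 := by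
  ext ⟨i, a⟩ ⟨j, c⟩
  rw [clusterBasisInv_mul_apply]
  by_cases hij : i = j
  · subst hij
    simp only [clusterBasis, one_apply, Sigma.mk.inj_iff, heq_eq_eq]
    grind
  · simp [clusterBasis, one_apply, hij]

/-- The matrix `L̂` of the paper: `L̂_{ij} = L̃_{ij} - 1 γ_{ij}ᵀ`. -/
def reduced (A : Matrix ((i : ι) × Fin (n i + 1)) ((i : ι) × Fin (n i + 1)) R) :
    Matrix ((i : ι) × Fin (n i)) ((i : ι) × Fin (n i)) R :=
  of fun p q => A ⟨p.1, p.2.succ⟩ ⟨q.1, q.2.succ⟩ - A ⟨p.1, 0⟩ ⟨q.1, q.2.succ⟩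

variable (n) in
def firstNodeEquiv : ((i : ι) × Fin (n i + 1)) ≃ ι ⊕ (i : ι) × Fin (n i) where
  toFun v := Fin.cases (Sum.inl v.1) (fun b => Sum.inr ⟨v.1, b⟩) v.2
  invFun := Sum.elim (fun i => ⟨i, 0⟩) (fun p => ⟨p.1, p.2.succ⟩)
  left_inv := by rintro ⟨i, a⟩; induction a using Fin.cases <;> simp
  right_inv := by rintro (i | ⟨i, b⟩) <;> simp

theorem conj_apply_succ_succ
    (A : Matrix ((i : ι) × Fin (n i + 1)) ((i : ι) × Fin (n i + 1)) R)
    (i : ι) (a : Fin (n i)) (j : ι) (b : Fin (n j)) :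
    (clusterBasisInv n R * A * clusterBasis n R) ⟨i, a.succ⟩ ⟨j, b.succ⟩ =
      reduced A ⟨i, a⟩ ⟨j, b⟩ := by
  rw [mul_clusterBasis_apply, if_neg b.succ_ne_zero, clusterBasisInv_mul_apply,
    if_neg a.succ_ne_zero, reduced, of_apply]

section BlockRowSums

variable {A : Matrix ((i : ι) × Fin (n i + 1)) ((i : ι) × Fin (n i + 1)) R}
  {β : ι → ι → R}
  (hA : ∀ (i : ι) (a : Fin (n i + 1)) (j : ι), ∑ b, A ⟨i, a⟩ ⟨j, b⟩ = β i j)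
include hA

theorem conj_apply_zero_zero (i j : ι) :
    (clusterBasisInv n R * A * clusterBasis n R) ⟨i, 0⟩ ⟨j, 0⟩ = β i j := by
  simp only [mul_clusterBasis_apply, clusterBasisInv_mul_apply, if_true, hA]

theorem conj_apply_succ_zero (i : ι) (a : Fin (n i)) (j : ι) :
    (clusterBasisInv n R * A * clusterBasis n R) ⟨i, a.succ⟩ ⟨j, 0⟩ = 0 := by
  simp only [mul_clusterBasis_apply, clusterBasisInv_mul_apply, if_true,
    if_neg a.succ_ne_zero, Finset.sum_sub_distrib, hA, sub_self]

theorem reindex_conj_eq_fromBlocks :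
    reindex (firstNodeEquiv n) (firstNodeEquiv n)
        (clusterBasisInv n R * A * clusterBasis n R) =
      fromBlocks (of β)
        (of fun i q => (clusterBasisInv n R * A * clusterBasis n R) ⟨i, 0⟩ ⟨q.1, q.2.succ⟩)
        0 (reduced A) := by
  ext (i | ⟨i, a⟩) (j | ⟨j, b⟩)
  · exact conj_apply_zero_zero hA i j
  · rfl
  · exact conj_apply_succ_zero hA i a j
  · exact conj_apply_succ_succ A i a j b

theorem charpoly_eq_charpoly_mul_charpoly_reduced :
    A.charpoly = (of β).charpoly * (reduced A).charpoly := by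
  rw [← charpoly_conj_of_mul_eq_one clusterBasisInv_mul_clusterBasis A,
    ← charpoly_reindex (firstNodeEquiv n), reindex_conj_eq_fromBlocks hA,
    charpoly_fromBlocks_zero₂₁]

end BlockRowSums

end ClusterReduction

open ClusterReduction

theorem stmt0_general (N : ℕ) (l : Fin N → ℕ)
    (ℒ : Matrix ((i : Fin N) × Fin (l i + 1)) ((i : Fin N) × Fin (l i + 1)) ℝ)
    (β : Fin N → Fin N → ℝ)
    -- inter-cluster common influence: constant block row sums
    (hblock : ∀ (i : Fin N) (a : Fin (l i + 1)) (j : Fin N),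
      ∑ b : Fin (l j + 1), ℒ ⟨i, a⟩ ⟨j, b⟩ = β i j)
    -- the quotient Laplacian
    (LG : Matrix (Fin N) (Fin N) ℝ) (hLG : ∀ i j, LG i j = β i j)
    -- the reduced matrix  L̂_{ij} = L̃_{ij} − 1·γ_{ij}^T
    (Lhat : Matrix ((i : Fin N) × Fin (l i)) ((i : Fin N) × Fin (l i)) ℝ)
    (hLhat : ∀ (i : Fin N) (a : Fin (l i)) (j : Fin N) (b : Fin (l j)),
      Lhat ⟨i, a⟩ ⟨j, b⟩ = ℒ ⟨i, a.succ⟩ ⟨j, b.succ⟩ - ℒ ⟨i, 0⟩ ⟨j, b.succ⟩) :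
    (∃ S : Matrix ((i : Fin N) × Fin (l i + 1)) ((i : Fin N) × Fin (l i + 1)) ℝ,
        IsUnit S.det ∧
        -- block with first nodes as both row and column indices equals the quotient Laplacian
        (∀ i j : Fin N, (S⁻¹ * ℒ * S) ⟨i, 0⟩ ⟨j, 0⟩ = LG i j) ∧
        -- blocks below: zero (block upper-triangular after permutation)
        (∀ (i : Fin N) (a : Fin (l i)) (j : Fin N),
            (S⁻¹ * ℒ * S) ⟨i, a.succ⟩ ⟨j, 0⟩ = 0) ∧
        -- bottom-right block equals L̂
        (∀ (i : Fin N) (a : Fin (l i)) (j : Fin N) (b : Fin (l j)),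
            (S⁻¹ * ℒ * S) ⟨i, a.succ⟩ ⟨j, b.succ⟩ = Lhat ⟨i, a⟩ ⟨j, b⟩)) ∧
    ℒ.charpoly = LG.charpoly * Lhat.charpoly := by
  obtain rfl : LG = of β := ext hLG
  obtain rfl : Lhat = reduced ℒ := ext fun ⟨i, a⟩ ⟨j, b⟩ => hLhat i a j b
  have hinv : (clusterBasis l ℝ)⁻¹ = clusterBasisInv l ℝ :=
    inv_eq_left_inv clusterBasisInv_mul_clusterBasis
  refine ⟨⟨clusterBasis l ℝ, isUnit_det_of_left_inverse clusterBasisInv_mul_clusterBasis,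
    ?_, ?_, ?_⟩, charpoly_eq_charpoly_mul_charpoly_reduced hblock⟩ <;> rw [hinv]
  · exact conj_apply_zero_zero hblock
  · exact conj_apply_succ_zero hblock
  · exact conj_apply_succ_succ ℒ

/-- Block decomposition of a cluster-partitioned Laplacian with constant
block row sums: `ℒ` is similar to a block upper-triangular matrix with diagonal blocks
the quotient Laplacian `LG` and the reduced matrix `Lhat`; consequently the
characteristic polynomial (hence the spectrum with multiplicity) factors accordingly.
Nodes are indexed by `⟨i, a⟩` where `i` is the cluster and `a` the position in cluster
`i` (cluster `i` has `l i + 1` nodes, node `⟨i, 0⟩` being the first node of cluster `i`). -/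
theorem stmt0 (N : ℕ) (l : Fin N → ℕ)
    (ℒ : Matrix ((i : Fin N) × Fin (l i + 1)) ((i : Fin N) × Fin (l i + 1)) ℝ)
    (β : Fin N → Fin N → ℝ)
    -- Laplacian of a nonnegative digraph: nonpositive off-diagonal entries, zero row sums
    (hoff : ∀ v k, v ≠ k → ℒ v k ≤ 0)
    (hrow : ∀ v, ∑ k, ℒ v k = 0)
    -- inter-cluster common influence: constant block row sums
    (hblock : ∀ (i : Fin N) (a : Fin (l i + 1)) (j : Fin N),
      ∑ b : Fin (l j + 1), ℒ ⟨i, a⟩ ⟨j, b⟩ = β i j)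
    -- the quotient Laplacian
    (LG : Matrix (Fin N) (Fin N) ℝ) (hLG : ∀ i j, LG i j = β i j)
    -- the reduced matrix  L̂_{ij} = L̃_{ij} − 1·γ_{ij}^T
    (Lhat : Matrix ((i : Fin N) × Fin (l i)) ((i : Fin N) × Fin (l i)) ℝ)
    (hLhat : ∀ (i : Fin N) (a : Fin (l i)) (j : Fin N) (b : Fin (l j)),
      Lhat ⟨i, a⟩ ⟨j, b⟩ = ℒ ⟨i, a.succ⟩ ⟨j, b.succ⟩ - ℒ ⟨i, 0⟩ ⟨j, b.succ⟩) :
    (∃ S : Matrix ((i : Fin N) × Fin (l i + 1)) ((i : Fin N) × Fin (l i + 1)) ℝ,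
        IsUnit S.det ∧
        -- block with first nodes as both row and column indices equals the quotient Laplacian
        (∀ i j : Fin N, (S⁻¹ * ℒ * S) ⟨i, 0⟩ ⟨j, 0⟩ = LG i j) ∧
        -- blocks below: zero (block upper-triangular after permutation)
        (∀ (i : Fin N) (a : Fin (l i)) (j : Fin N),
            (S⁻¹ * ℒ * S) ⟨i, a.succ⟩ ⟨j, 0⟩ = 0) ∧
        -- bottom-right block equals L̂
        (∀ (i : Fin N) (a : Fin (l i)) (j : Fin N) (b : Fin (l j)),
            (S⁻¹ * ℒ * S) ⟨i, a.succ⟩ ⟨j, b.succ⟩ = Lhat ⟨i, a⟩ ⟨j, b⟩)) ∧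
    ℒ.charpoly = LG.charpoly * Lhat.charpoly :=
  stmt0_general N l ℒ β hblock LG hLG Lhat hLhat
end

section
/- Under the inter-cluster common influence assumption, all eigenvalues of the reduced matrix L̂ have positive real parts if and only if the Laplacian L of the full graph G and the quotient Laplacian L_G have equal numbers of zero eigenvalues (counted with algebraic multiplicity). -/
/-!
Node `0` of each cluster serves as its reference node. Because every block of `ℒ` has constant
row sums, conjugating `ℒ` by the shear that subtracts from each node the row of its reference
node makes it block upper triangular with diagonal blocks `L_G` and `L̂`, so
`χ_ℒ = χ_{L_G} · χ_{L̂}`. Hence the multiplicities of `0` agree iff `0` is not an eigenvalue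
of `L̂`. By Gershgorin's theorem every eigenvalue of a Laplacian is `0` or has positive real
part, and the eigenvalues of `L̂` are eigenvalues of `ℒ`; this gives the converse.
-/

open Matrix Polynomial

lemma Complex.eq_zero_or_re_pos_of_norm_sub_le {μ : ℂ} {c : ℝ} (h : ‖μ - c‖ ≤ c) :
    μ = 0 ∨ 0 < μ.re := by
  rcases lt_or_ge 0 μ.re with hre | hre
  · exact Or.inr hre
  have hsq : ‖μ - c‖ ^ 2 ≤ c ^ 2 := pow_le_pow_left₀ (norm_nonneg _) h 2
  rw [Complex.sq_norm, Complex.normSq_apply] at hsq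
  simp only [Complex.sub_re, Complex.ofReal_re, Complex.sub_im, Complex.ofReal_im,
    sub_zero] at hsq
  have hc : 0 ≤ c := (norm_nonneg _).trans h
  left
  apply Complex.ext <;> simp only [Complex.zero_re, Complex.zero_im] <;>
    nlinarith [sq_nonneg μ.re, sq_nonneg μ.im]

section RealSpectrum

variable {n m : Type*} [Fintype n] [DecidableEq n] [Fintype m] [DecidableEq m]

theorem Matrix.mem_spectrum_map_ofReal_iff (A : Matrix n n ℝ) (μ : ℂ) :
    μ ∈ spectrum ℂ (A.map Complex.ofReal) ↔ (A.charpoly.map Complex.ofRealHom).IsRoot μ := by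
  rw [mem_spectrum_iff_isRoot_charpoly, ← charpoly_map]
  rfl

theorem Matrix.zero_mem_spectrum_map_ofReal_iff (A : Matrix n n ℝ) :
    0 ∈ spectrum ℂ (A.map Complex.ofReal) ↔ A.charpoly.IsRoot 0 := by
  rw [mem_spectrum_map_ofReal_iff, ← Complex.ofRealHom.map_zero,
    isRoot_map_iff Complex.ofReal_injective]

theorem Matrix.spectrum_map_ofReal_subset_of_charpoly_dvd {A : Matrix n n ℝ}
    {B : Matrix m m ℝ} (h : B.charpoly ∣ A.charpoly) :
    spectrum ℂ (B.map Complex.ofReal) ⊆ spectrum ℂ (A.map Complex.ofReal) := fun μ hμ => by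
  rw [mem_spectrum_map_ofReal_iff] at hμ ⊢
  exact hμ.dvd (Polynomial.map_dvd _ h)

theorem Matrix.eq_zero_or_re_pos_of_mem_spectrum_of_laplacian (L : Matrix n n ℝ)
    (hoff : ∀ i j, i ≠ j → L i j ≤ 0) (hrow : ∀ i, ∑ j, L i j = 0) {μ : ℂ}
    (hμ : μ ∈ spectrum ℂ (L.map Complex.ofReal)) : μ = 0 ∨ 0 < μ.re := by
  rw [← spectrum_toLin', ← Module.End.hasEigenvalue_iff_mem_spectrum] at hμ
  obtain ⟨k, hk⟩ := eigenvalue_mem_ball hμ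
  have hradius : ∑ j ∈ Finset.univ.erase k, ‖(L.map Complex.ofReal k j : ℂ)‖ = L k k := by
    have hsplit := Finset.sum_erase_add _ (fun j => L k j) (Finset.mem_univ k)
    rw [hrow] at hsplit
    rw [show L k k = ∑ j ∈ Finset.univ.erase k, -L k j by
      rw [Finset.sum_neg_distrib]; linarith]
    refine Finset.sum_congr rfl fun j hj => ?_
    rw [map_apply, Complex.norm_real, Real.norm_eq_abs,
      abs_of_nonpos (hoff k j (Finset.ne_of_mem_erase hj).symm)]
  rw [hradius, Metric.mem_closedBall, dist_eq_norm, map_apply] at hk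
  exact Complex.eq_zero_or_re_pos_of_norm_sub_le hk

end RealSpectrum

def Equiv.sigmaFinSuccEquivSum {ι : Type*} (l : ι → ℕ) :
    (Σ i, Fin (l i + 1)) ≃ ι ⊕ Σ i, Fin (l i) where
  toFun p := Fin.cases (Sum.inl p.1) (fun b => Sum.inr ⟨p.1, b⟩) p.2
  invFun := Sum.elim (fun i => ⟨i, 0⟩) (fun q => ⟨q.1, q.2.succ⟩)
  left_inv := by
    rintro ⟨i, a⟩
    induction a using Fin.cases <;> simp
  right_inv := by
    rintro (i | ⟨i, b⟩) <;> simp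

@[simp] theorem Equiv.sigmaFinSuccEquivSum_symm_inl {ι : Type*} (l : ι → ℕ) (i : ι) :
    (Equiv.sigmaFinSuccEquivSum l).symm (Sum.inl i) = ⟨i, 0⟩ := rfl

@[simp] theorem Equiv.sigmaFinSuccEquivSum_symm_inr {ι : Type*} (l : ι → ℕ)
    (q : Σ i, Fin (l i)) :
    (Equiv.sigmaFinSuccEquivSum l).symm (Sum.inr q) = ⟨q.1, q.2.succ⟩ := rfl

namespace Matrix

variable {R : Type*} [CommRing R]

-- `h` says that conjugation by the shear `fromBlocks 1 0 (-E) 1` makes `M` block upper triangular.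
theorem charpoly_eq_mul_of_shear {m n : Type*} [Fintype m] [DecidableEq m] [Fintype n]
    [DecidableEq n] (M : Matrix (n ⊕ m) (n ⊕ m) R) (E : Matrix m n R)
    (h : M.toBlocks₂₁ - E * M.toBlocks₁₁ + (M.toBlocks₂₂ - E * M.toBlocks₁₂) * E = 0) :
    M.charpoly = (M.toBlocks₁₁ + M.toBlocks₁₂ * E).charpoly *
      (M.toBlocks₂₂ - E * M.toBlocks₁₂).charpoly := by
  set T : Matrix (n ⊕ m) (n ⊕ m) R := fromBlocks 1 0 (-E) 1
  set T' : Matrix (n ⊕ m) (n ⊕ m) R := fromBlocks 1 0 E 1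
  have hinv : T' * T = 1 := by simp [T, T', fromBlocks_multiply, ← fromBlocks_one]
  have hconj : T * M * T' = fromBlocks (M.toBlocks₁₁ + M.toBlocks₁₂ * E) M.toBlocks₁₂ 0
      (M.toBlocks₂₂ - E * M.toBlocks₁₂) := by
    rw [← fromBlocks_toBlocks M, fromBlocks_multiply, fromBlocks_multiply]
    simp only [toBlocks_fromBlocks₁₁, toBlocks_fromBlocks₁₂, toBlocks_fromBlocks₂₂]
    rw [← h]
    congr 1 <;>
      simp only [Matrix.one_mul, Matrix.mul_one, Matrix.zero_mul, Matrix.mul_zero,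
        Matrix.neg_mul, add_zero, zero_add, Matrix.add_mul, Matrix.sub_mul] <;>
      abel
  calc M.charpoly = (T' * (T * M)).charpoly := by rw [← mul_assoc, hinv, one_mul]
    _ = (T * M * T').charpoly := charpoly_mul_comm _ _
    _ = _ := by rw [hconj, charpoly_fromBlocks_zero₂₁]

section Sigma

variable {ι : Type*} [Fintype ι] [DecidableEq ι] {κ : ι → Type*}

-- The ascriptions `(sigmaFst : Matrix _ _ R)` below keep elaboration from choosing the
-- `CStarMatrix` multiplication instance while the implicit arguments are still unknown.
def sigmaFst : Matrix (Σ i, κ i) ι R := of fun p j => if p.1 = j then 1 else 0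

theorem sigmaFst_mul_apply {o : Type*} (X : Matrix ι o R) (p : Σ i, κ i) (k : o) :
    ((sigmaFst : Matrix (Σ i, κ i) ι R) * X) p k = X p.1 k := by
  simp [sigmaFst, mul_apply]

theorem mul_sigmaFst_apply [∀ i, Fintype (κ i)] {o : Type*} (Y : Matrix o (Σ i, κ i) R) (q : o)
    (j : ι) :
    (Y * (sigmaFst : Matrix (Σ i, κ i) ι R)) q j = ∑ b : κ j, Y q ⟨j, b⟩ := by
  rw [mul_apply, Fintype.sum_sigma, Finset.sum_eq_single j]
  · simp [sigmaFst]
  · intro i _ hij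
    simp [sigmaFst, hij]
  · simp

end Sigma

section Cluster

variable {ι : Type*} [Fintype ι] [DecidableEq ι] {l : ι → ℕ}

def clusterReduced (L : Matrix (Σ i, Fin (l i + 1)) (Σ i, Fin (l i + 1)) R) :
    Matrix (Σ i, Fin (l i)) (Σ i, Fin (l i)) R :=
  of fun p q => L ⟨p.1, p.2.succ⟩ ⟨q.1, q.2.succ⟩ - L ⟨p.1, 0⟩ ⟨q.1, q.2.succ⟩

theorem charpoly_eq_mul_charpoly_clusterReduced
    (L : Matrix (Σ i, Fin (l i + 1)) (Σ i, Fin (l i + 1)) R) (β : ι → ι → R)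
    (hblock : ∀ i a j, ∑ b : Fin (l j + 1), L ⟨i, a⟩ ⟨j, b⟩ = β i j) :
    L.charpoly = (of β).charpoly * L.clusterReduced.charpoly := by
  have hblock' : ∀ i a j, L ⟨i, a⟩ ⟨j, 0⟩ + ∑ b : Fin (l j), L ⟨i, a⟩ ⟨j, b.succ⟩ = β i j :=
    fun i a j => by rw [← hblock i a j, Fin.sum_univ_succ]
  set M := reindex (Equiv.sigmaFinSuccEquivSum l) (Equiv.sigmaFinSuccEquivSum l) L
  rw [← charpoly_reindex (Equiv.sigmaFinSuccEquivSum l), charpoly_eq_mul_of_shear M sigmaFst]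
  · congr 2
    · ext i j
      rw [add_apply, mul_sigmaFst_apply]
      simpa [M, toBlocks₁₁, toBlocks₁₂] using hblock' i 0 j
    · ext p q
      rw [sub_apply, sigmaFst_mul_apply]
      simp [M, toBlocks₂₂, toBlocks₁₂, clusterReduced]
  · ext p j
    rw [add_apply, sub_apply, sigmaFst_mul_apply, mul_sigmaFst_apply]
    simp [M, toBlocks₂₁, toBlocks₁₁, toBlocks₂₂, toBlocks₁₂, sigmaFst_mul_apply,
      Finset.sum_sub_distrib]
    linear_combination hblock' p.1 p.2.succ j - hblock' p.1 0 j

end Cluster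

end Matrix

/-- Under the inter-cluster common influence assumption, all eigenvalues of
the reduced matrix `Lhat` have positive real parts iff the Laplacian `ℒ` of the full
graph and the quotient Laplacian `LG` have equal numbers of zero eigenvalues (counted
with algebraic multiplicity). -/
theorem stmt1 (N : ℕ) (l : Fin N → ℕ)
    (ℒ : Matrix ((i : Fin N) × Fin (l i + 1)) ((i : Fin N) × Fin (l i + 1)) ℝ)
    (β : Fin N → Fin N → ℝ)
    (hoff : ∀ v k, v ≠ k → ℒ v k ≤ 0)
    (hrow : ∀ v, ∑ k, ℒ v k = 0)
    (hblock : ∀ (i : Fin N) (a : Fin (l i + 1)) (j : Fin N),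
      ∑ b : Fin (l j + 1), ℒ ⟨i, a⟩ ⟨j, b⟩ = β i j)
    (LG : Matrix (Fin N) (Fin N) ℝ) (hLG : ∀ i j, LG i j = β i j)
    (Lhat : Matrix ((i : Fin N) × Fin (l i)) ((i : Fin N) × Fin (l i)) ℝ)
    (hLhat : ∀ (i : Fin N) (a : Fin (l i)) (j : Fin N) (b : Fin (l j)),
      Lhat ⟨i, a⟩ ⟨j, b⟩ = ℒ ⟨i, a.succ⟩ ⟨j, b.succ⟩ - ℒ ⟨i, 0⟩ ⟨j, b.succ⟩) :
    (∀ μ ∈ spectrum ℂ (Lhat.map (Complex.ofReal)), 0 < μ.re) ↔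
    ℒ.charpoly.rootMultiplicity 0 = LG.charpoly.rootMultiplicity 0 := by
  have hfactor : ℒ.charpoly = LG.charpoly * Lhat.charpoly := by
    rw [show LG = of β from ext hLG,
      show Lhat = ℒ.clusterReduced from ext fun p q => hLhat p.1 p.2 q.1 q.2]
    exact charpoly_eq_mul_charpoly_clusterReduced ℒ β hblock
  have hmult : ℒ.charpoly.rootMultiplicity 0 = LG.charpoly.rootMultiplicity 0 ↔
      0 ∉ spectrum ℂ (Lhat.map Complex.ofReal) := by
    rw [zero_mem_spectrum_map_ofReal_iff, hfactor,
      rootMultiplicity_mul (LG.charpoly_monic.mul Lhat.charpoly_monic).ne_zero, add_eq_left,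
      rootMultiplicity_eq_zero_iff, imp_iff_not Lhat.charpoly_monic.ne_zero]
  rw [hmult]
  refine ⟨fun hpos h0 => (hpos 0 h0).false, fun h0 μ hμ => ?_⟩
  have hμℒ := spectrum_map_ofReal_subset_of_charpoly_dvd (Dvd.intro_left _ hfactor.symm) hμ
  exact (eq_zero_or_re_pos_of_mem_spectrum_of_laplacian ℒ hoff hrow hμℒ).resolve_left
    (by rintro rfl; exact h0 hμ)
end

section
/- Let (A,B) be a stabilizable pair, Q ≻ 0, and P ≻ 0 a solution of the algebraic Riccati equation PA + A^T P − PBB^T P = −Q. Set K = B^T P. Then for any complex number λ with 2δ·Re(λ) ≥ 1, the matrix A − δλBK satisfies the Lyapunov inequality (A − δλBK)^* P + P(A − δλBK) ≤ −Q, and hence A − δλBK is Hurwitz (all eigenvalues have negative real parts). -/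
open Matrix
open scoped ComplexOrder

/-!
With `K = BᵀP` the Riccati equation reads `AᵀP + PA = KᵀK - Q`, so for `M = A - c B K` one gets
`-(MᴴP + PM) - Q = (2 Re c - 1) KᴴK`, which is positive semidefinite as soon as `2 Re c ≥ 1`.
If `M v = μ v` with `v ≠ 0`, then `v*(MᴴP + PM)v = 2 Re μ · v*Pv`; the Lyapunov inequality makes
the left side negative while `v*Pv > 0`, hence `Re μ < 0`.
-/

namespace Matrix

variable {l m n : Type*}

theorem exists_mulVec_eq_smul_of_mem_spectrum {K : Type*} [Field K] [Fintype n] [DecidableEq n]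
    {A : Matrix n n K} {μ : K} (hμ : μ ∈ spectrum K A) : ∃ v ≠ 0, A *ᵥ v = μ • v := by
  rw [← spectrum_toLin', ← Module.End.hasEigenvalue_iff_mem_spectrum] at hμ
  obtain ⟨v, hv⟩ := hμ.exists_hasEigenvector
  exact ⟨v, hv.2, by simpa using hv.apply_eq_smul⟩

theorem conjTranspose_map_ofReal (X : Matrix m n ℝ) :
    (X.map Complex.ofReal)ᴴ = Xᵀ.map Complex.ofReal := by
  rw [← conjTranspose_eq_transpose_of_trivial, conjTranspose_map _ fun x => by simp]

open scoped MatrixOrder in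
theorem PosDef.map_ofReal [Fintype n] [DecidableEq n] {R : Matrix n n ℝ} (hR : R.PosDef) :
    (R.map Complex.ofReal).PosDef := by
  obtain ⟨S, hS, rfl⟩ :=
    CStarAlgebra.isStrictlyPositive_iff_eq_star_mul_self.mp hR.isStrictlyPositive
  have hmap :
      (star S * S).map Complex.ofReal = (S.map Complex.ofReal)ᴴ * S.map Complex.ofReal := by
    rw [conjTranspose_map_ofReal, star_eq_conjTranspose, conjTranspose_eq_transpose_of_trivial]
    exact Matrix.map_mul (f := Complex.ofRealHom)
  rw [hmap]
  exact PosDef.conjTranspose_mul_self _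
    (mulVec_injective_iff_isUnit.mpr (hS.map Complex.ofRealHom.mapMatrix))

theorem map_ofReal_mul [Fintype n] (X : Matrix l n ℝ) (Y : Matrix n m ℝ) :
    (X * Y).map Complex.ofReal = X.map Complex.ofReal * Y.map Complex.ofReal :=
  Matrix.map_mul (f := Complex.ofRealHom)

end Matrix

theorem neg_lyapunov_sub_eq_of_riccati {m n R : Type*} [Fintype m] [Fintype n] [CommRing R]
    [StarRing R] {A P Q : Matrix n n R} {B : Matrix n m R} (hP : P.IsHermitian)
    (hRic : P * A + Aᴴ * P - P * B * Bᴴ * P = -Q) (c : R) :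
    -((A - c • (B * (Bᴴ * P)))ᴴ * P + P * (A - c • (B * (Bᴴ * P)))) - Q =
      (star c + c - 1) • ((Bᴴ * P)ᴴ * (Bᴴ * P)) := by
  set K := Bᴴ * P
  have hK : Kᴴ = P * B := by rw [conjTranspose_mul, conjTranspose_conjTranspose, hP]
  have hAP : Aᴴ * P + P * A = Kᴴ * K - Q := by
    rw [hK, ← Matrix.mul_assoc, ← neg_neg Q, ← hRic]; abel
  have hMP : (A - c • (B * K))ᴴ * P = Aᴴ * P - star c • (Kᴴ * K) := by
    rw [conjTranspose_sub, conjTranspose_smul, conjTranspose_mul, sub_mul, smul_mul_assoc,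
      Matrix.mul_assoc]
  have hPM : P * (A - c • (B * K)) = P * A - c • (Kᴴ * K) := by
    rw [mul_sub, mul_smul_comm, hK, Matrix.mul_assoc]
  rw [hMP, hPM]
  linear_combination (norm := module) -hAP

theorem re_neg_of_mem_spectrum_of_posDef_lyapunov {n : Type*} [Fintype n] [DecidableEq n]
    {M P : Matrix n n ℂ} (hP : P.PosDef) (hL : (-(Mᴴ * P + P * M)).PosDef) :
    ∀ μ ∈ spectrum ℂ M, μ.re < 0 := by
  intro μ hμ
  obtain ⟨v, hv0, hv⟩ := exists_mulVec_eq_smul_of_mem_spectrum hμ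
  have hquad : star v ⬝ᵥ (Mᴴ * P + P * M) *ᵥ v = (2 * μ.re : ℝ) * (star v ⬝ᵥ P *ᵥ v) := by
    rw [add_mulVec, dotProduct_add, ← mulVec_mulVec, ← mulVec_mulVec, dotProduct_mulVec,
      ← star_mulVec, hv, mulVec_smul, star_smul, smul_dotProduct,
      dotProduct_smul, smul_eq_mul, smul_eq_mul, ← add_mul, RCLike.star_def, add_comm,
      Complex.add_conj]
  have hPv := hP.re_dotProduct_pos hv0
  have hLv := hL.re_dotProduct_pos hv0
  rw [neg_mulVec, dotProduct_neg, hquad] at hLv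
  simp only [RCLike.re_to_complex, Complex.neg_re, Complex.re_ofReal_mul] at hLv hPv
  nlinarith

theorem stmt3_general (n nu : ℕ) (A : Matrix (Fin n) (Fin n) ℝ) (B : Matrix (Fin n) (Fin nu) ℝ)
    (P Q : Matrix (Fin n) (Fin n) ℝ) (hP : P.PosDef) (hQ : Q.PosDef)
    (hRic : P * A + Aᵀ * P - P * B * Bᵀ * P = -Q)
    (K : Matrix (Fin nu) (Fin n) ℝ) (hK : K = Bᵀ * P)
    (δ : ℝ) (lam : ℂ) (hlam : 1 ≤ 2 * δ * lam.re)
    (M : Matrix (Fin n) (Fin n) ℂ)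
    (hM : M = A.map Complex.ofReal - ((δ : ℂ) * lam) • (B * K).map Complex.ofReal) :
    Matrix.PosSemidef (-(Mᴴ * P.map Complex.ofReal + P.map Complex.ofReal * M)
        - Q.map Complex.ofReal) ∧
    ∀ μ ∈ spectrum ℂ M, μ.re < 0 := by
  have hRicC : P.map Complex.ofReal * A.map Complex.ofReal +
      (A.map Complex.ofReal)ᴴ * P.map Complex.ofReal -
      P.map Complex.ofReal * B.map Complex.ofReal * (B.map Complex.ofReal)ᴴ * P.map Complex.ofReal =
      -Q.map Complex.ofReal := by
    simpa only [Matrix.map_sub _ Complex.ofReal_sub, Matrix.map_add _ Complex.ofReal_add,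
      Matrix.map_neg _ Complex.ofReal_neg, map_ofReal_mul, conjTranspose_map_ofReal]
      using congrArg (·.map Complex.ofReal) hRic
  set p := P.map Complex.ofReal
  set b := B.map Complex.ofReal
  have hBK : (B * K).map Complex.ofReal = b * (bᴴ * p) := by
    rw [hK, conjTranspose_map_ofReal, map_ofReal_mul, map_ofReal_mul]
  have hcoef : star ((δ : ℂ) * lam) + δ * lam - 1 = ((2 * δ * lam.re - 1 : ℝ) : ℂ) := by
    rw [add_comm, RCLike.star_def, Complex.add_conj, Complex.re_ofReal_mul]; push_cast; ring
  have hlyap : (-(Mᴴ * p + p * M) - Q.map Complex.ofReal).PosSemidef := by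
    rw [hM, hBK, neg_lyapunov_sub_eq_of_riccati hP.map_ofReal.isHermitian hRicC, hcoef]
    exact (posSemidef_conjTranspose_mul_self _).smul (by exact_mod_cast (by linarith))
  refine ⟨hlyap, re_neg_of_mem_spectrum_of_posDef_lyapunov hP.map_ofReal ?_⟩
  simpa using PosDef.posSemidef_add hlyap hQ.map_ofReal

/-- If `P ≻ 0` solves the Riccati equation `PA + AᵀP − PBBᵀP = −Q` with
`Q ≻ 0`, `K = BᵀP`, then for any `δ > 0` and `λ ∈ ℂ` with `2δ·Re(λ) ≥ 1`, the complex
matrix `M = A − δλBK` satisfies the Lyapunov inequality `Mᴴ P + P M ≤ −Q`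
(i.e. `−(Mᴴ P + P M) − Q` is positive semidefinite), and hence `M` is Hurwitz. -/
theorem stmt3 (n nu : ℕ) (A : Matrix (Fin n) (Fin n) ℝ) (B : Matrix (Fin n) (Fin nu) ℝ)
    (P Q : Matrix (Fin n) (Fin n) ℝ) (hP : P.PosDef) (hQ : Q.PosDef)
    (hRic : P * A + Aᵀ * P - P * B * Bᵀ * P = -Q)
    (K : Matrix (Fin nu) (Fin n) ℝ) (hK : K = Bᵀ * P)
    (δ : ℝ) (hδ : 0 < δ) (lam : ℂ) (hlam : 1 ≤ 2 * δ * lam.re)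
    (M : Matrix (Fin n) (Fin n) ℂ)
    (hM : M = A.map Complex.ofReal - ((δ : ℂ) * lam) • (B * K).map Complex.ofReal) :
    Matrix.PosSemidef (-(Mᴴ * P.map Complex.ofReal + P.map Complex.ofReal * M)
        - Q.map Complex.ofReal) ∧
    ∀ μ ∈ spectrum ℂ M, μ.re < 0 :=
  stmt3_general n nu A B P Q hP hQ hRic K hK δ lam hlam M hM
end

section
/- Let L̂ ∈ ℝ^{(L−N)×(L−N)} be a matrix all of whose eigenvalues have positive real parts, let (A,B) be stabilizable with P ≻ 0 solving the Riccati equation PA + A^T P − PBB^T P = −Q for some Q ≻ 0, and set K = B^T P. If δ ≥ 1/(2·min_l Re λ_l(L̂)), then the Kronecker-structured matrix I_{L−N} ⊗ A − δ L̂ ⊗ BK is Hurwitz. -/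
/-!
`L̂ ⊗ 1` commutes with `M = 1 ⊗ A − δ L̂ ⊗ BK`, so an eigenvector of `M` can be chosen to be an
eigenvector of `L̂ ⊗ 1` as well, for some eigenvalue `ν` of `L̂`; on it `M` acts as
`1 ⊗ (A − δν BK)`. Hence every eigenvalue of `M` is one of `X = A − c BBᵀP` with `c = δν` and
`2 Re c ≥ 1`. The Riccati equation turns into the Lyapunov equation
`PX + XᴴP = −Q'` with `Q' = Q + (2 Re c − 1) PBBᵀP ≻ 0`, and evaluating it on an eigenvector `v`
of `X` gives `2 Re μ · v*Pv = −v*Q'v < 0`.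
-/

open Matrix Kronecker ComplexOrder

namespace Module.End

variable {K V : Type*} [Field K] [IsAlgClosed K] [AddCommGroup V] [Module K V]
  [FiniteDimensional K V]

theorem exists_hasEigenvector_of_commute {f g : End K V} (hfg : Commute f g) {μ : K}
    (hμ : f.HasEigenvalue μ) : ∃ ν v, f.HasEigenvector μ v ∧ g.HasEigenvector ν v := by
  have hmaps := mapsTo_genEigenspace_of_comm hfg μ 1
  have : Nontrivial (f.eigenspace μ) := Submodule.nontrivial_iff_ne_bot.mpr hμ
  obtain ⟨ν, hν⟩ := exists_eigenvalue (g.restrict hmaps)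
  obtain ⟨w, hw⟩ := hν.exists_hasEigenvector
  refine ⟨ν, w, ⟨w.2, by simpa using hw.2⟩, ?_, by simpa using hw.2⟩
  rw [mem_eigenspace_iff]
  exact congrArg Subtype.val hw.apply_eq_smul

end Module.End

namespace Matrix

section Spectrum

variable {K l m : Type*} [Field K] [Fintype l] [DecidableEq l] [Fintype m] [DecidableEq m]

theorem mem_spectrum_iff_exists_mulVec_eq_smul {C : Matrix m m K} {μ : K} :
    μ ∈ spectrum K C ↔ ∃ v ≠ 0, C *ᵥ v = μ • v := by
  rw [← spectrum_toLin', ← Module.End.hasEigenvalue_iff_mem_spectrum]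
  constructor
  · intro h
    obtain ⟨v, hv⟩ := h.exists_hasEigenvector
    exact ⟨v, hv.2, by simpa using hv.apply_eq_smul⟩
  · rintro ⟨v, hv, hCv⟩
    exact Module.End.hasEigenvalue_of_hasEigenvector
      ⟨Module.End.mem_eigenspace_iff.mpr (by simpa using hCv), hv⟩

theorem exists_mulVec_eq_smul_of_commute [IsAlgClosed K] {T R : Matrix m m K} (hTR : Commute T R)
    {μ : K} (hμ : μ ∈ spectrum K T) : ∃ ν : K, ∃ v ≠ 0, T *ᵥ v = μ • v ∧ R *ᵥ v = ν • v := by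
  rw [← spectrum_toLin', ← Module.End.hasEigenvalue_iff_mem_spectrum] at hμ
  obtain ⟨ν, v, hTv, hRv⟩ :=
    Module.End.exists_hasEigenvector_of_commute (hTR.map toLinAlgEquiv') hμ
  exact ⟨ν, v, hTv.2, by simpa using hTv.apply_eq_smul, by simpa using hRv.apply_eq_smul⟩

theorem spectrum_kronecker_one_subset (C : Matrix l l K) :
    spectrum K (C ⊗ₖ (1 : Matrix m m K)) ⊆ spectrum K C := by
  intro μ
  simp only [spectrum.mem_iff, not_imp_not]
  intro hC
  have : algebraMap K _ μ - C ⊗ₖ (1 : Matrix m m K) = (algebraMap K _ μ - C) ⊗ₖ 1 := by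
    ext ⟨i, j⟩ ⟨i', j'⟩
    simp only [sub_apply, kroneckerMap_apply, algebraMap_matrix_apply, one_apply, Prod.mk.injEq]
    split_ifs <;> simp_all
  rw [this]
  exact IsUnit.kronecker hC isUnit_one

theorem spectrum_one_kronecker_subset (C : Matrix m m K) :
    spectrum K ((1 : Matrix l l K) ⊗ₖ C) ⊆ spectrum K C := by
  intro μ
  simp only [spectrum.mem_iff, not_imp_not]
  intro hC
  have : algebraMap K _ μ - (1 : Matrix l l K) ⊗ₖ C = 1 ⊗ₖ (algebraMap K _ μ - C) := by
    ext ⟨i, j⟩ ⟨i', j'⟩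
    simp only [sub_apply, kroneckerMap_apply, algebraMap_matrix_apply, one_apply, Prod.mk.injEq]
    split_ifs <;> simp_all
  rw [this]
  exact IsUnit.kronecker isUnit_one hC

theorem exists_mem_spectrum_of_mem_spectrum_one_kronecker_sub_kronecker [IsAlgClosed K]
    {A M : Matrix m m K} {L : Matrix l l K} {μ : K}
    (hμ : μ ∈ spectrum K (1 ⊗ₖ A - L ⊗ₖ M)) : ∃ ν ∈ spectrum K L, μ ∈ spectrum K (A - ν • M) := by
  have hcomm : Commute (1 ⊗ₖ A - L ⊗ₖ M) (L ⊗ₖ (1 : Matrix m m K)) := by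
    simp only [Commute, SemiconjBy, sub_mul, mul_sub, ← mul_kronecker_mul, one_mul, mul_one]
  obtain ⟨ν, v, hv, hTv, hLv⟩ := exists_mulVec_eq_smul_of_commute hcomm hμ
  refine ⟨ν, spectrum_kronecker_one_subset L
    (mem_spectrum_iff_exists_mulVec_eq_smul.mpr ⟨v, hv, hLv⟩), ?_⟩
  refine spectrum_one_kronecker_subset (l := l) _
    (mem_spectrum_iff_exists_mulVec_eq_smul.mpr ⟨v, hv, ?_⟩)
  have hsplit : (1 : Matrix l l K) ⊗ₖ (A - ν • M)
      = (1 ⊗ₖ A - L ⊗ₖ M) + (1 ⊗ₖ M) * (L ⊗ₖ 1) - ν • (1 ⊗ₖ M) := by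
    rw [← mul_kronecker_mul, one_mul, mul_one, sub_add_cancel]
    ext ⟨i, j⟩ ⟨i', j'⟩
    simp only [sub_apply, smul_apply, kroneckerMap_apply, smul_eq_mul]
    ring
  rw [hsplit, sub_mulVec, add_mulVec, ← mulVec_mulVec, hTv, hLv, mulVec_smul, smul_mulVec,
    add_sub_cancel_right]

end Spectrum

section Complexification

variable {n k : Type*} [Fintype n] [Fintype k]

theorem re_star_dotProduct_map_ofReal_mulVec (P : Matrix n n ℝ) (v : n → ℂ) :
    (star v ⬝ᵥ (P.map Complex.ofReal *ᵥ v)).re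
      = (fun i ↦ (v i).re) ⬝ᵥ (P *ᵥ fun i ↦ (v i).re)
        + (fun i ↦ (v i).im) ⬝ᵥ (P *ᵥ fun i ↦ (v i).im) := by
  simp only [dotProduct, mulVec, Pi.star_apply, map_apply, Finset.mul_sum,
    ← Finset.sum_add_distrib, Complex.re_sum]
  refine Finset.sum_congr rfl fun i _ ↦ Finset.sum_congr rfl fun j _ ↦ ?_
  simp [Complex.mul_re]

theorem PosDef.map_ofReal_s4 {P : Matrix n n ℝ} (hP : P.PosDef) : (P.map Complex.ofReal).PosDef := by
  have hH : (P.map Complex.ofReal).IsHermitian :=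
    hP.isHermitian.map _ fun r ↦ (Complex.conj_ofReal r).symm
  refine .of_dotProduct_mulVec_pos hH fun v hv ↦ Complex.lt_def.mpr ⟨?_, ?_⟩
  · rw [Complex.zero_re, re_star_dotProduct_map_ofReal_mulVec]
    obtain h | h : (fun i ↦ (v i).re) ≠ 0 ∨ (fun i ↦ (v i).im) ≠ 0 := by
      by_contra! h
      exact hv (funext fun i ↦ Complex.ext (congrFun h.1 i) (congrFun h.2 i))
    · exact add_pos_of_pos_of_nonneg (hP.dotProduct_mulVec_pos h)
        (hP.posSemidef.dotProduct_mulVec_nonneg _)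
    · exact add_pos_of_nonneg_of_pos (hP.posSemidef.dotProduct_mulVec_nonneg _)
        (hP.dotProduct_mulVec_pos h)
  · exact (hH.im_star_dotProduct_mulVec_self v).symm

theorem riccati_map_ofReal {A P Q : Matrix n n ℝ} {B : Matrix n k ℝ}
    (hRic : P * A + Aᵀ * P - P * B * Bᵀ * P = -Q) :
    P.map Complex.ofReal * A.map Complex.ofReal + (A.map Complex.ofReal)ᴴ * P.map Complex.ofReal
      - P.map Complex.ofReal * B.map Complex.ofReal * (B.map Complex.ofReal)ᴴ
        * P.map Complex.ofReal = -Q.map Complex.ofReal := by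
  ext i j
  have hij := congrArg (fun M ↦ (M i j : ℂ)) hRic
  simp only [sub_apply, add_apply, neg_apply, mul_apply, transpose_apply,
    conjTranspose_apply, map_apply, Complex.star_def, Complex.conj_ofReal] at hij ⊢
  exact_mod_cast hij

end Complexification

section Lyapunov

variable {n k : Type*} [Fintype n] [DecidableEq n] [Fintype k]

theorem re_lt_zero_of_lyapunov {P Q X : Matrix n n ℂ} (hP : P.PosDef) (hQ : Q.PosDef)
    (hX : P * X + Xᴴ * P = -Q) {μ : ℂ} (hμ : μ ∈ spectrum ℂ X) : μ.re < 0 := by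
  obtain ⟨v, hv, hXv⟩ := mem_spectrum_iff_exists_mulVec_eq_smul.mp hμ
  have hform : star v ⬝ᵥ ((P * X + Xᴴ * P) *ᵥ v)
      = (μ + star μ) * (star v ⬝ᵥ (P *ᵥ v)) := by
    rw [add_mulVec, dotProduct_add, ← mulVec_mulVec, ← mulVec_mulVec, hXv,
      dotProduct_mulVec (star v) Xᴴ, ← star_mulVec, hXv, star_smul, mulVec_smul, dotProduct_smul,
      smul_dotProduct]
    simp only [smul_eq_mul]
    ring
  rw [hX, neg_mulVec, dotProduct_neg, Complex.star_def, Complex.add_conj] at hform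
  have hre := congrArg Complex.re hform
  rw [Complex.neg_re, Complex.re_ofReal_mul] at hre
  have hp : 0 < (star v ⬝ᵥ (P *ᵥ v)).re := hP.re_dotProduct_pos hv
  have hq : 0 < (star v ⬝ᵥ (Q *ᵥ v)).re := hQ.re_dotProduct_pos hv
  nlinarith

theorem re_lt_zero_of_riccati {A P Q : Matrix n n ℂ} {B : Matrix n k ℂ} (hP : P.PosDef)
    (hQ : Q.PosDef) (hRic : P * A + Aᴴ * P - P * B * Bᴴ * P = -Q) {c : ℂ} (hc : 1 ≤ 2 * c.re)
    {μ : ℂ} (hμ : μ ∈ spectrum ℂ (A - c • (B * Bᴴ * P))) : μ.re < 0 := by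
  set R := P * B * Bᴴ * P
  have hR : R.PosSemidef := by
    simpa [R, conjTranspose_mul, hP.isHermitian.eq, Matrix.mul_assoc]
      using posSemidef_conjTranspose_mul_self (Bᴴ * P)
  have hscalar : (0 : ℂ) ≤ ((2 * c.re - 1 : ℝ) : ℂ) := Complex.zero_le_real.mpr (by linarith)
  refine re_lt_zero_of_lyapunov hP (hQ.add_posSemidef (hR.smul hscalar)) ?_ hμ
  have hPc : P * (c • (B * Bᴴ * P)) = c • R := by
    rw [mul_smul_comm]
    simp only [R, Matrix.mul_assoc]
  have hcP : (c • (B * Bᴴ * P))ᴴ * P = star c • R := by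
    rw [conjTranspose_smul, smul_mul_assoc]
    simp [R, conjTranspose_mul, hP.isHermitian.eq, Matrix.mul_assoc]
  have hQR : Q = R - (P * A + Aᴴ * P) := by
    rw [← neg_neg Q, ← hRic]
    abel
  have hcc : ((2 * c.re - 1 : ℝ) : ℂ) = c + star c - 1 := by
    rw [Complex.star_def, Complex.add_conj]
    push_cast
    ring
  rw [mul_sub, conjTranspose_sub, sub_mul, hPc, hcP, hQR, hcc]
  module

end Lyapunov

end Matrix

theorem one_le_two_mul_re_mul_of_one_div_two_sInf_re_le {S : Set ℂ} (hS : S.Finite)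
    (hpos : ∀ z ∈ S, 0 < z.re) {ν : ℂ} (hν : ν ∈ S) {δ : ℝ}
    (hδ : 1 / (2 * sInf (Complex.re '' S)) ≤ δ) : 1 ≤ 2 * (ν * δ).re := by
  have hfin : (Complex.re '' S).Finite := hS.image _
  obtain ⟨z, hz, hz_min⟩ := ((Set.nonempty_of_mem hν).image _).csInf_mem hfin
  have hmin_pos : 0 < sInf (Complex.re '' S) := hz_min ▸ hpos z hz
  have hmin_le : sInf (Complex.re '' S) ≤ ν.re := csInf_le hfin.bddBelow ⟨ν, hν, rfl⟩
  rw [div_le_iff₀ (by positivity)] at hδ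
  rw [Complex.re_mul_ofReal]
  nlinarith

/-- If all eigenvalues of `Lhat` have positive real parts, `P ≻ 0` solves
the Riccati equation, `K = BᵀP`, and `δ ≥ 1/(2·min Re λ(Lhat))`, then
`I ⊗ A − δ (Lhat ⊗ BK)` is Hurwitz. -/
theorem stmt4 (d n nu : ℕ)
    (Lhat : Matrix (Fin d) (Fin d) ℝ)
    (hpos : ∀ μ ∈ spectrum ℂ (Lhat.map Complex.ofReal), 0 < μ.re)
    (A : Matrix (Fin n) (Fin n) ℝ) (B : Matrix (Fin n) (Fin nu) ℝ)
    (P Q : Matrix (Fin n) (Fin n) ℝ) (hP : P.PosDef) (hQ : Q.PosDef)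
    (hRic : P * A + Aᵀ * P - P * B * Bᵀ * P = -Q)
    (K : Matrix (Fin nu) (Fin n) ℝ) (hK : K = Bᵀ * P)
    (δ : ℝ)
    (hδ : 1 / (2 * sInf (Complex.re '' spectrum ℂ (Lhat.map Complex.ofReal))) ≤ δ) :
    ∀ μ ∈ spectrum ℂ
      (((1 : Matrix (Fin d) (Fin d) ℝ) ⊗ₖ A - δ • (Lhat ⊗ₖ (B * K))).map Complex.ofReal),
      μ.re < 0 := by
  intro μ hμ
  have hsplit : ((1 : Matrix (Fin d) (Fin d) ℝ) ⊗ₖ A - δ • (Lhat ⊗ₖ (B * K))).map Complex.ofReal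
      = (1 : Matrix (Fin d) (Fin d) ℂ) ⊗ₖ A.map Complex.ofReal
        - Lhat.map Complex.ofReal ⊗ₖ ((δ : ℂ) • (B.map Complex.ofReal
          * (B.map Complex.ofReal)ᴴ * P.map Complex.ofReal)) := by
    subst hK
    rw [Matrix.mul_assoc]
    ext ⟨i, j⟩ ⟨i', j'⟩
    simp only [map_apply, Matrix.sub_apply, Matrix.smul_apply, kroneckerMap_apply, one_apply, mul_apply,
      conjTranspose_apply, transpose_apply, Complex.star_def, Complex.conj_ofReal, smul_eq_mul]
    split_ifs <;> push_cast <;> ring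
  rw [hsplit] at hμ
  obtain ⟨ν, hν, hμν⟩ := exists_mem_spectrum_of_mem_spectrum_one_kronecker_sub_kronecker hμ
  rw [smul_smul] at hμν
  exact re_lt_zero_of_riccati hP.map_ofReal_s4 hQ.map_ofReal_s4 (riccati_map_ofReal hRic)
    (one_le_two_mul_re_mul_of_one_div_two_sInf_re_le (finite_spectrum _) hpos hν hδ) hμν
end

section
/- Consider the linear multi-agent system ẋ = (I_L ⊗ A − δ L ⊗ BK)x on ℝ^{nL}, where L is the Laplacian of a nonnegative digraph partitioned into clusters C_1,...,C_N satisfying the inter-cluster common influence condition. The stacked intra-cluster error vector e(t), with components e_l = x_l − x_{ρ_i+1} for l ∈ C_i \ {ρ_i+1}, satisfies the closed linear system ė = (I_{L−N} ⊗ A − δ L̂ ⊗ BK)e, where L̂ is the reduced matrix defined by L̂_{ij} = L̃_{ij} − 1·γ_{ij}^T. -/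
open Matrix

/-!
Subtracting the dynamics of the leader `⟨i, 0⟩` of a cluster from those of `⟨i, a + 1⟩` leaves the
coupling term `∑ₖ (ℒ ⟨i, a + 1⟩ k − ℒ ⟨i, 0⟩ k) • xₖ`. By the common influence condition the
coefficients of this difference sum to zero over every cluster `j`, so within each cluster the
states may be replaced by their deviations `xⱼ,b − xⱼ,0` from the leader, whose coefficients are
exactly the entries of `L̂`.
-/

section ZeroSumCombination

variable {R M : Type*} [Ring R] [AddCommGroup M] [Module R M]

theorem Fin.sum_smul_eq_sum_succ_smul_sub_zero {m : ℕ} (c : Fin (m + 1) → R)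
    (hc : ∑ b, c b = 0) (y : Fin (m + 1) → M) :
    ∑ b, c b • y b = ∑ b : Fin m, c b.succ • (y b.succ - y 0) := by
  have hc0 : c 0 = -∑ b : Fin m, c b.succ := by
    rw [Fin.sum_univ_succ] at hc
    exact eq_neg_of_add_eq_zero_left hc
  simp only [Fin.sum_univ_succ (f := fun b => c b • y b), hc0, neg_smul, Finset.sum_smul,
    smul_sub, Finset.sum_sub_distrib]
  abel

theorem Fintype.sum_sigma_smul_eq_sum_succ_smul_sub_zero {ι : Type*} [Fintype ι]
    {l : ι → ℕ} (c : ((j : ι) × Fin (l j + 1)) → R)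
    (hc : ∀ j, ∑ b, c ⟨j, b⟩ = 0) (y : ((j : ι) × Fin (l j + 1)) → M) :
    ∑ k, c k • y k =
      ∑ k : (j : ι) × Fin (l j), c ⟨k.1, k.2.succ⟩ • (y ⟨k.1, k.2.succ⟩ - y ⟨k.1, 0⟩) := by
  rw [Fintype.sum_sigma, Fintype.sum_sigma]
  exact Finset.sum_congr rfl fun j _ =>
    Fin.sum_smul_eq_sum_succ_smul_sub_zero (fun b => c ⟨j, b⟩) (hc j) (fun b => y ⟨j, b⟩)

end ZeroSumCombination

theorem stmt6_general (N n nu : ℕ) (l : Fin N → ℕ)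
    (ℒ : Matrix ((i : Fin N) × Fin (l i + 1)) ((i : Fin N) × Fin (l i + 1)) ℝ)
    (β : Fin N → Fin N → ℝ)
    (hblock : ∀ (i : Fin N) (a : Fin (l i + 1)) (j : Fin N),
      ∑ b : Fin (l j + 1), ℒ ⟨i, a⟩ ⟨j, b⟩ = β i j)
    (Lhat : Matrix ((i : Fin N) × Fin (l i)) ((i : Fin N) × Fin (l i)) ℝ)
    (hLhat : ∀ (i : Fin N) (a : Fin (l i)) (j : Fin N) (b : Fin (l j)),
      Lhat ⟨i, a⟩ ⟨j, b⟩ = ℒ ⟨i, a.succ⟩ ⟨j, b.succ⟩ - ℒ ⟨i, 0⟩ ⟨j, b.succ⟩)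
    (A : Matrix (Fin n) (Fin n) ℝ) (B : Matrix (Fin n) (Fin nu) ℝ)
    (K : Matrix (Fin nu) (Fin n) ℝ) (δ : ℝ)
    (x : ℝ → ((i : Fin N) × Fin (l i + 1)) → (Fin n → ℝ))
    (hx : ∀ t v, HasDerivAt (fun s => x s v)
        (A.mulVec (x t v) - δ • (B * K).mulVec (∑ k, ℒ v k • x t k)) t)
    (e : ℝ → ((i : Fin N) × Fin (l i)) → (Fin n → ℝ))
    (he : ∀ (t : ℝ) (i : Fin N) (a : Fin (l i)),
        e t ⟨i, a⟩ = x t ⟨i, a.succ⟩ - x t ⟨i, 0⟩) :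
    ∀ t v, HasDerivAt (fun s => e s v)
        (A.mulVec (e t v) - δ • (B * K).mulVec (∑ k, Lhat v k • e t k)) t := by
  rintro t ⟨i, a⟩
  have coupling : ∑ k, Lhat ⟨i, a⟩ k • e t k
      = ∑ k, ℒ ⟨i, a.succ⟩ k • x t k - ∑ k, ℒ ⟨i, 0⟩ k • x t k := by
    rw [← Finset.sum_sub_distrib]
    simp only [← sub_smul]
    rw [Fintype.sum_sigma_smul_eq_sum_succ_smul_sub_zero _
      (fun j => by rw [Finset.sum_sub_distrib, hblock, hblock, sub_self])]
    exact Finset.sum_congr rfl fun k _ => by rw [hLhat, he]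
  have hdiff := (hx t ⟨i, a.succ⟩).sub (hx t ⟨i, 0⟩)
  rw [show (fun s => e s ⟨i, a⟩) = fun s => x s ⟨i, a.succ⟩ - x s ⟨i, 0⟩ from
    funext fun s => he s i a]
  refine hdiff.congr_deriv ?_
  rw [he, coupling, mulVec_sub, mulVec_sub, smul_sub]
  abel

/-- Under the inter-cluster common influence condition, the stacked
intra-cluster error vector `e`, with `e ⟨i,a⟩ = x ⟨i,a.succ⟩ − x ⟨i,0⟩`, satisfies the
closed linear system `ė = (I ⊗ A − δ L̂ ⊗ BK) e`, where cluster `i` consists of the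
nodes `⟨i, b⟩`, `b : Fin (l i + 1)`, and `L̂` is the reduced matrix. -/
theorem stmt6 (N n nu : ℕ) (l : Fin N → ℕ)
    (ℒ : Matrix ((i : Fin N) × Fin (l i + 1)) ((i : Fin N) × Fin (l i + 1)) ℝ)
    (β : Fin N → Fin N → ℝ)
    (hoff : ∀ v k, v ≠ k → ℒ v k ≤ 0)
    (hrow : ∀ v, ∑ k, ℒ v k = 0)
    (hblock : ∀ (i : Fin N) (a : Fin (l i + 1)) (j : Fin N),
      ∑ b : Fin (l j + 1), ℒ ⟨i, a⟩ ⟨j, b⟩ = β i j)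
    (Lhat : Matrix ((i : Fin N) × Fin (l i)) ((i : Fin N) × Fin (l i)) ℝ)
    (hLhat : ∀ (i : Fin N) (a : Fin (l i)) (j : Fin N) (b : Fin (l j)),
      Lhat ⟨i, a⟩ ⟨j, b⟩ = ℒ ⟨i, a.succ⟩ ⟨j, b.succ⟩ - ℒ ⟨i, 0⟩ ⟨j, b.succ⟩)
    (A : Matrix (Fin n) (Fin n) ℝ) (B : Matrix (Fin n) (Fin nu) ℝ)
    (K : Matrix (Fin nu) (Fin n) ℝ) (δ : ℝ)
    (x : ℝ → ((i : Fin N) × Fin (l i + 1)) → (Fin n → ℝ))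
    (hx : ∀ t v, HasDerivAt (fun s => x s v)
        (A.mulVec (x t v) - δ • (B * K).mulVec (∑ k, ℒ v k • x t k)) t)
    (e : ℝ → ((i : Fin N) × Fin (l i)) → (Fin n → ℝ))
    (he : ∀ (t : ℝ) (i : Fin N) (a : Fin (l i)),
        e t ⟨i, a⟩ = x t ⟨i, a.succ⟩ - x t ⟨i, 0⟩) :
    ∀ t v, HasDerivAt (fun s => e s v)
        (A.mulVec (e t v) - δ • (B * K).mulVec (∑ k, Lhat v k • e t k)) t :=
  stmt6_general N n nu l ℒ β hblock Lhat hLhat A B K δ x hx e he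
end

section
/- The linear multi-agent system ẋ = (I_L ⊗ A − δ L ⊗ BK)x achieves group consensus for all initial states (i.e., x_l(t) − x_k(t) → 0 for all l,k in the same cluster) if and only if the matrix I_{L−N} ⊗ A − δ L̂ ⊗ BK is Hurwitz, where L̂ is the reduced matrix obtained from L via the cluster error transformation. -/
/-!
Measure every agent against the first agent of its cluster. Since all agents of a cluster receive
the same total weight from each cluster (the common influence condition), these errors obey the
closed linear system `ė = (I ⊗ A - δ L̂ ⊗ BK) e`, and every initial error comes from some initial
state. Group consensus therefore says that every solution of this linear ODE tends to zero. For a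
real matrix `M` this holds exactly when all eigenvalues of `M` have negative real part: solutions
are `exp (t M) y₀`, which on a generalized eigenspace is `e^{tμ}` times a polynomial in `t`, while
an eigenvalue with `Re μ ≥ 0` and eigenvector `v` gives the non-decaying real solutions
`Re (e^{tμ} v)` and `Im (e^{tμ} v)`.
-/

open Matrix Kronecker Filter Topology NormedSpace

attribute [local instance] Matrix.linftyOpNormedRing Matrix.linftyOpNormedAlgebra

theorem tendsto_cexp_mul_mul_pow_atTop_zero {μ : ℂ} (hμ : μ.re < 0) (j : ℕ) :
    Tendsto (fun t : ℝ => Complex.exp (t * μ) * (t : ℂ) ^ j) atTop (𝓝 0) := by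
  rw [tendsto_zero_iff_norm_tendsto_zero]
  refine (tendsto_rpow_mul_exp_neg_mul_atTop_nhds_zero j (-μ.re) (neg_pos.2 hμ)).congr' ?_
  filter_upwards [eventually_ge_atTop 0] with t ht
  simp [Complex.norm_exp, abs_of_nonneg ht, mul_comm]

theorem tendsto_nhds_zero_of_re_of_im {α W : Type*} {f : Filter α} {z : α → W → ℂ}
    (hre : Tendsto (fun t w => (z t w).re) f (𝓝 0))
    (him : Tendsto (fun t w => (z t w).im) f (𝓝 0)) : Tendsto z f (𝓝 0) := by
  refine tendsto_pi_nhds.2 fun w => ?_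
  have hw := ((Complex.continuous_ofReal.tendsto 0).comp (tendsto_pi_nhds.1 hre w)).add
    (((Complex.continuous_ofReal.tendsto 0).comp (tendsto_pi_nhds.1 him w)).mul_const Complex.I)
  rw [Complex.ofReal_zero, zero_mul, add_zero] at hw
  exact hw.congr fun t => Complex.re_add_im _

namespace Matrix

variable {W 𝕜 : Type*} [Fintype W] [RCLike 𝕜]

theorem eq_of_hasDerivAt_mulVec {M : Matrix W W 𝕜} {y z : ℝ → W → 𝕜}
    (hy : ∀ t, HasDerivAt y (M *ᵥ y t) t) (hz : ∀ t, HasDerivAt z (M *ᵥ z t) t)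
    (h₀ : y 0 = z 0) : y = z :=
  ODE_solution_unique_univ (v := fun _ => (M *ᵥ ·)) (s := fun _ => Set.univ) (t₀ := 0)
    (fun _ => (LinearMap.toContinuousLinearMap (M.mulVecLin.restrictScalars ℝ)).lipschitz
      |>.lipschitzOnWith)
    (fun t => ⟨hy t, trivial⟩) (fun t => ⟨hz t, trivial⟩) h₀

theorem hasDerivAt_map_ofReal_mulVec {M : Matrix W W ℝ} {y : ℝ → W → ℝ}
    (hy : ∀ t, HasDerivAt y (M *ᵥ y t) t) (t : ℝ) :
    HasDerivAt (fun s w => (y s w : ℂ)) (M.map Complex.ofReal *ᵥ fun w => (y t w : ℂ)) t := by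
  refine hasDerivAt_pi.2 fun w => ?_
  have h := (hasDerivAt_pi.1 (hy t) w).ofReal_comp
  rwa [show ((M *ᵥ y t) w : ℂ) = (M.map Complex.ofReal *ᵥ fun w => (y t w : ℂ)) w from
    RingHom.map_mulVec Complex.ofRealHom M (y t) w] at h

theorem hasDerivAt_clm_comp_mulVec {M : Matrix W W ℝ} {z : ℝ → W → ℂ}
    (hz : ∀ t, HasDerivAt z (M.map Complex.ofReal *ᵥ z t) t) (φ : ℂ →L[ℝ] ℝ) (t : ℝ) :
    HasDerivAt (fun s w => φ (z s w)) (M *ᵥ fun w => φ (z t w)) t := by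
  refine hasDerivAt_pi.2 fun w => ?_
  refine (φ.hasFDerivAt.comp_hasDerivAt t (hasDerivAt_pi.1 (hz t) w)).congr_deriv ?_
  simp only [mulVec, dotProduct, map_apply, ← Complex.real_smul, map_sum, map_smul, smul_eq_mul]

theorem hasDerivAt_cexp_smul {M : Matrix W W ℂ} {μ : ℂ} {v : W → ℂ} (hv : M *ᵥ v = μ • v)
    (t : ℝ) :
    HasDerivAt (fun s : ℝ => Complex.exp (s * μ) • v) (M *ᵥ (Complex.exp (t * μ) • v)) t := by
  have h := (((hasDerivAt_id t).ofReal_comp.mul_const μ).cexp).smul_const v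
  rw [mulVec_smul, hv, smul_smul]
  simpa using h

variable [DecidableEq W]

theorem hasDerivAt_exp_smul_mulVec (M : Matrix W W 𝕜) (v : W → 𝕜) (t : ℝ) :
    HasDerivAt (fun s : ℝ => exp (s • M) *ᵥ v) (M *ᵥ (exp (t • M) *ᵥ v)) t := by
  let applyTo : Matrix W W 𝕜 →L[ℝ] W → 𝕜 :=
    LinearMap.toContinuousLinearMap ((mulVecBilin ℝ ℝ).flip v)
  rw [mulVec_mulVec]
  exact applyTo.hasFDerivAt.comp_hasDerivAt t (hasDerivAt_exp_smul_const' M t)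

theorem eq_exp_smul_mulVec_of_hasDerivAt {M : Matrix W W 𝕜} {y : ℝ → W → 𝕜}
    (hy : ∀ t, HasDerivAt y (M *ᵥ y t) t) (t : ℝ) : y t = exp (t • M) *ᵥ y 0 := by
  refine congrFun (eq_of_hasDerivAt_mulVec hy (hasDerivAt_exp_smul_mulVec M (y 0)) ?_) t
  simp

theorem exists_hasDerivAt_mulVec (M : Matrix W W 𝕜) (y₀ : W → 𝕜) :
    ∃ y : ℝ → W → 𝕜, (∀ t, HasDerivAt y (M *ᵥ y t) t) ∧ y 0 = y₀ :=
  ⟨fun t => exp (t • M) *ᵥ y₀, hasDerivAt_exp_smul_mulVec M y₀, by simp⟩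

theorem exp_smul_mulVec_eq_sum_of_pow_mulVec_eq_zero {N : Matrix W W 𝕜} {u : W → 𝕜} {k : ℕ}
    (hk : (N ^ k) *ᵥ u = 0) (t : ℝ) :
    exp (t • N) *ᵥ u = ∑ j ∈ Finset.range k, (t ^ j / j.factorial : ℝ) • ((N ^ j) *ᵥ u) := by
  let applyTo : Matrix W W 𝕜 →L[ℝ] W → 𝕜 :=
    LinearMap.toContinuousLinearMap ((mulVecBilin ℝ ℝ).flip u)
  have hterm (j : ℕ) : applyTo ((j.factorial⁻¹ : ℝ) • (t • N) ^ j)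
      = (t ^ j / j.factorial : ℝ) • ((N ^ j) *ᵥ u) := by
    simp [applyTo, smul_pow, smul_smul, div_eq_inv_mul]
  have hvanish (j : ℕ) (hj : j ∉ Finset.range k) :
      applyTo ((j.factorial⁻¹ : ℝ) • (t • N) ^ j) = 0 := by
    obtain ⟨i, rfl⟩ := Nat.exists_eq_add_of_le' (not_lt.1 (Finset.mem_range.not.1 hj))
    rw [hterm, pow_add N, ← mulVec_mulVec, hk, mulVec_zero, smul_zero]
  refine ((exp_series_hasSum_exp' (𝕂 := ℝ) (t • N)).mapL applyTo).unique ?_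
  simpa only [hterm] using hasSum_sum_of_ne_finset_zero hvanish

theorem exp_smul_eq_cexp_smul_exp_smul_sub (M : Matrix W W ℂ) (μ : ℂ) (t : ℝ) :
    exp (t • M) = Complex.exp (t * μ) • exp (t • (M - μ • 1)) := by
  have hsplit : t • M = algebraMap ℂ (Matrix W W ℂ) (t * μ) + t • (M - μ • 1) := by
    have : t • (μ • 1 : Matrix W W ℂ) = ((t : ℂ) * μ) • 1 := by rw [← smul_smul, Complex.coe_smul]
    rw [Algebra.algebraMap_eq_smul_one, smul_sub, this]
    abel
  have hscalar : exp (algebraMap ℂ (Matrix W W ℂ) (t * μ)) = Complex.exp (t * μ) • 1 := by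
    rw [Complex.exp_eq_exp_ℂ, ← Algebra.algebraMap_eq_smul_one]
    exact (algebraMap_exp_comm _).symm
  rw [hsplit, exp_add_of_commute _ _ (Algebra.commute_algebraMap_left _ _), hscalar,
    smul_one_mul]

theorem mem_spectrum_of_mem_maxGenEigenspace {M : Matrix W W ℂ} {μ : ℂ} {u : W → ℂ}
    (hu : u ∈ Module.End.maxGenEigenspace M.toLin' μ) (hu₀ : u ≠ 0) : μ ∈ spectrum ℂ M := by
  have hμ : Module.End.HasUnifEigenvalue M.toLin' μ ⊤ := (Submodule.ne_bot_iff _).2 ⟨u, hu, hu₀⟩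
  rw [← spectrum_toLin', ← Module.End.hasEigenvalue_iff_mem_spectrum]
  exact hμ.lt zero_lt_one

theorem tendsto_exp_smul_mulVec_of_mem_maxGenEigenspace {M : Matrix W W ℂ} {μ : ℂ}
    (hμ : μ.re < 0) {u : W → ℂ} (hu : u ∈ Module.End.maxGenEigenspace M.toLin' μ) :
    Tendsto (fun t : ℝ => exp (t • M) *ᵥ u) atTop (𝓝 0) := by
  obtain ⟨k, hk⟩ := (Module.End.mem_maxGenEigenspace _ _ _).1 hu
  have hk' : ((M - μ • 1) ^ k) *ᵥ u = 0 := by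
    rwa [← toLin'_apply, toLin'_pow, map_sub, map_smul, toLin'_one, ← Module.End.one_eq_id]
  have hexpand (t : ℝ) : exp (t • M) *ᵥ u = ∑ j ∈ Finset.range k,
      (Complex.exp (t * μ) * (t : ℂ) ^ j * (j.factorial : ℂ)⁻¹) • (((M - μ • 1) ^ j) *ᵥ u) := by
    rw [exp_smul_eq_cexp_smul_exp_smul_sub M μ, smul_mulVec,
      exp_smul_mulVec_eq_sum_of_pow_mulVec_eq_zero hk', Finset.smul_sum]
    refine Finset.sum_congr rfl fun j _ => ?_
    rw [← Complex.coe_smul, smul_smul]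
    push_cast
    ring_nf
  simp_rw [hexpand]
  rw [show (0 : W → ℂ) = ∑ j ∈ Finset.range k,
      (0 * (j.factorial : ℂ)⁻¹) • (((M - μ • 1) ^ j) *ᵥ u) by simp]
  exact tendsto_finsetSum _ fun j _ =>
    ((tendsto_cexp_mul_mul_pow_atTop_zero hμ j).mul_const _).smul_const _

def IsHurwitz (M : Matrix W W ℂ) : Prop := ∀ μ ∈ spectrum ℂ M, μ.re < 0

theorem tendsto_exp_smul_mulVec_zero {M : Matrix W W ℂ} (hM : M.IsHurwitz)
    (v : W → ℂ) : Tendsto (fun t : ℝ => exp (t • M) *ᵥ v) atTop (𝓝 0) := by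
  have hv : v ∈ ⨆ μ, Module.End.maxGenEigenspace M.toLin' μ := by
    rw [Module.End.iSup_maxGenEigenspace_eq_top]
    trivial
  induction hv using Submodule.iSup_induction' with
  | mem μ u hu =>
    rcases eq_or_ne u 0 with rfl | hu₀
    · simp
    · exact tendsto_exp_smul_mulVec_of_mem_maxGenEigenspace
        (hM μ (mem_spectrum_of_mem_maxGenEigenspace hu hu₀)) hu
  | zero => simp
  | add u w _ _ hu hw => simpa [mulVec_add] using hu.add hw

theorem IsHurwitz.tendsto_zero_of_hasDerivAt {M : Matrix W W ℝ}
    (hM : (M.map Complex.ofReal).IsHurwitz) {y : ℝ → W → ℝ}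
    (hy : ∀ t, HasDerivAt y (M *ᵥ y t) t) : Tendsto y atTop (𝓝 0) := by
  have hz := hasDerivAt_map_ofReal_mulVec hy
  have hdecay : Tendsto (fun t w => (y t w : ℂ)) atTop (𝓝 0) :=
    (tendsto_exp_smul_mulVec_zero hM _).congr fun t =>
      (eq_exp_smul_mulVec_of_hasDerivAt hz t).symm
  refine tendsto_pi_nhds.2 fun w => ?_
  simpa [Function.comp_def] using
    (Complex.continuous_re.tendsto 0).comp (tendsto_pi_nhds.1 hdecay w)

theorem isHurwitz_map_ofReal_of_forall_tendsto_zero {M : Matrix W W ℝ}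
    (h : ∀ y : ℝ → W → ℝ, (∀ t, HasDerivAt y (M *ᵥ y t) t) → Tendsto y atTop (𝓝 0)) :
    (M.map Complex.ofReal).IsHurwitz := by
  intro μ hμ
  by_contra! hμre
  rw [← spectrum_toLin', ← Module.End.hasEigenvalue_iff_mem_spectrum] at hμ
  obtain ⟨v, hv, hv₀⟩ := hμ.exists_hasEigenvector
  have hz := hasDerivAt_cexp_smul (Module.End.mem_eigenspace_iff.1 hv)
  have hdecay : Tendsto (fun t : ℝ => Complex.exp (t * μ) • v) atTop (𝓝 0) :=
    tendsto_nhds_zero_of_re_of_im (h _ (hasDerivAt_clm_comp_mulVec hz Complex.reCLM))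
      (h _ (hasDerivAt_clm_comp_mulVec hz Complex.imCLM))
  have hgrowth : ∀ᶠ t : ℝ in atTop, ‖v‖ ≤ ‖Complex.exp (t * μ) • v‖ := by
    filter_upwards [eventually_ge_atTop 0] with t ht
    rw [norm_smul, Complex.norm_exp]
    exact le_mul_of_one_le_left (norm_nonneg v)
      (Real.one_le_exp (by simpa using mul_nonneg ht hμre))
  exact hv₀ (norm_le_zero_iff.1 (by simpa using ge_of_tendsto hdecay.norm hgrowth))

theorem isHurwitz_map_ofReal_iff {M : Matrix W W ℝ} :
    (M.map Complex.ofReal).IsHurwitz ↔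
      ∀ y : ℝ → W → ℝ, (∀ t, HasDerivAt y (M *ᵥ y t) t) → Tendsto y atTop (𝓝 0) :=
  ⟨fun hM _ hy => hM.tendsto_zero_of_hasDerivAt hy, isHurwitz_map_ofReal_of_forall_tendsto_zero⟩

end Matrix

section ClusterError

variable {ι E : Type*} {l : ι → ℕ}

def clusterError [AddGroup E] (x : (i : ι) × Fin (l i + 1) → E) : (i : ι) × Fin (l i) → E :=
  fun q => x ⟨q.1, q.2.succ⟩ - x ⟨q.1, 0⟩

theorem clusterError_surjective [AddGroup E] :
    Function.Surjective (clusterError : ((i : ι) × Fin (l i + 1) → E) → _) := fun e =>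
  ⟨fun v => Fin.cases 0 (fun a => e ⟨v.1, a⟩) v.2, funext fun q => by simp [clusterError]⟩

theorem tendsto_clusterError_iff [AddGroup E] [TopologicalSpace E] [IsTopologicalAddGroup E]
    {α : Type*} {f : Filter α} {x : α → (i : ι) × Fin (l i + 1) → E} :
    Tendsto (fun t => clusterError (x t)) f (𝓝 0) ↔
      ∀ (i : ι) (a b : Fin (l i + 1)), Tendsto (fun t => x t ⟨i, a⟩ - x t ⟨i, b⟩) f (𝓝 0) := by
  refine ⟨fun h i a b => ?_, fun h => tendsto_pi_nhds.2 fun q => h q.1 q.2.succ 0⟩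
  have hbase (c : Fin (l i + 1)) : Tendsto (fun t => x t ⟨i, c⟩ - x t ⟨i, 0⟩) f (𝓝 0) := by
    induction c using Fin.cases with
    | zero => simpa using tendsto_const_nhds
    | succ c => exact tendsto_pi_nhds.1 h ⟨i, c⟩
  simpa using (hbase a).sub (hbase b)

variable [Fintype ι] {R : Type*} [CommRing R] [AddCommGroup E] [Module R E]

theorem sum_smul_sub_sum_smul_eq_sum_smul_clusterError
    {ℒ : Matrix ((i : ι) × Fin (l i + 1)) ((i : ι) × Fin (l i + 1)) R} {β : ι → ι → R}
    (hblock : ∀ (i : ι) (a : Fin (l i + 1)) (j : ι),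
      ∑ b : Fin (l j + 1), ℒ ⟨i, a⟩ ⟨j, b⟩ = β i j)
    {Lhat : Matrix ((i : ι) × Fin (l i)) ((i : ι) × Fin (l i)) R}
    (hLhat : ∀ (i : ι) (a : Fin (l i)) (j : ι) (b : Fin (l j)),
      Lhat ⟨i, a⟩ ⟨j, b⟩ = ℒ ⟨i, a.succ⟩ ⟨j, b.succ⟩ - ℒ ⟨i, 0⟩ ⟨j, b.succ⟩)
    (x : (i : ι) × Fin (l i + 1) → E) (i : ι) (a : Fin (l i)) :
    ∑ k, ℒ ⟨i, a.succ⟩ k • x k - ∑ k, ℒ ⟨i, 0⟩ k • x k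
      = ∑ q, Lhat ⟨i, a⟩ q • clusterError x q := by
  rw [← Finset.sum_sub_distrib]
  simp only [← sub_smul, ← Finset.univ_sigma_univ, Finset.sum_sigma, Fin.sum_univ_succ]
  refine Finset.sum_congr rfl fun j _ => ?_
  -- common influence: rows `⟨i, a + 1⟩` and `⟨i, 0⟩` have the same sum over cluster `j`
  have hfirst : ℒ ⟨i, a.succ⟩ ⟨j, 0⟩ - ℒ ⟨i, 0⟩ ⟨j, 0⟩
      = -∑ b : Fin (l j), (ℒ ⟨i, a.succ⟩ ⟨j, b.succ⟩ - ℒ ⟨i, 0⟩ ⟨j, b.succ⟩) := by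
    have h₁ := hblock i a.succ j
    have h₂ := hblock i 0 j
    rw [Fin.sum_univ_succ] at h₁ h₂
    rw [Finset.sum_sub_distrib]
    linear_combination h₁ - h₂
  rw [hfirst, neg_smul, Finset.sum_smul]
  simp only [hLhat, clusterError, smul_sub, Finset.sum_sub_distrib]
  abel

end ClusterError

section Network

variable {V m : Type*} [Fintype V] [DecidableEq V] [Fintype m]

theorem one_kronecker_sub_smul_kronecker_mulVec_uncurry {R : Type*} [CommRing R]
    (A C : Matrix m m R) (δ : R) (L : Matrix V V R) (x : V → m → R) (v : V) (j : m) :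
    ((1 ⊗ₖ A - δ • (L ⊗ₖ C)) *ᵥ Function.uncurry x) (v, j)
      = (A *ᵥ x v - δ • C *ᵥ ∑ k, L v k • x k) j := by
  simp only [mulVec, dotProduct, Matrix.sub_apply, kroneckerMap_apply, one_apply, ite_mul,
    one_mul, zero_mul, Matrix.smul_apply, smul_eq_mul, sub_mul, Finset.sum_sub_distrib,
    Fintype.sum_prod_type, Function.uncurry_apply_pair, Pi.sub_apply, Pi.smul_apply,
    Finset.sum_apply, Finset.mul_sum]
  congr 1
  · rw [Finset.sum_comm]
    simp only [Finset.sum_ite_eq, Finset.mem_univ, if_true]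
  · rw [Finset.sum_comm]
    refine Finset.sum_congr rfl fun i _ => Finset.sum_congr rfl fun k _ => ?_
    ring

theorem hasDerivAt_network_iff (A C : Matrix m m ℝ) (δ : ℝ) (L : Matrix V V ℝ)
    (x : ℝ → V → m → ℝ) :
    (∀ t v, HasDerivAt (fun s => x s v) (A *ᵥ x t v - δ • C *ᵥ ∑ k, L v k • x t k) t) ↔
      ∀ t, HasDerivAt (fun s => Function.uncurry (x s))
        ((1 ⊗ₖ A - δ • (L ⊗ₖ C)) *ᵥ Function.uncurry (x t)) t := by
  simp only [hasDerivAt_pi, Prod.forall, Function.uncurry_apply_pair,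
    one_kronecker_sub_smul_kronecker_mulVec_uncurry]

end Network

theorem tendsto_uncurry_nhds_zero_iff {α X Y M : Type*} [TopologicalSpace M] [Zero M]
    {f : Filter α} {e : α → X → Y → M} :
    Tendsto (fun t => Function.uncurry (e t)) f (𝓝 0) ↔ Tendsto e f (𝓝 0) := by
  simp only [tendsto_pi_nhds, Prod.forall, Function.uncurry_apply_pair, Pi.zero_apply]

section ErrorDynamics

variable {ι m : Type*} [Fintype ι] [Fintype m] {l : ι → ℕ}
  {ℒ : Matrix ((i : ι) × Fin (l i + 1)) ((i : ι) × Fin (l i + 1)) ℝ} {β : ι → ι → ℝ}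
  {Lhat : Matrix ((i : ι) × Fin (l i)) ((i : ι) × Fin (l i)) ℝ}

theorem hasDerivAt_clusterError
    (hblock : ∀ (i : ι) (a : Fin (l i + 1)) (j : ι),
      ∑ b : Fin (l j + 1), ℒ ⟨i, a⟩ ⟨j, b⟩ = β i j)
    (hLhat : ∀ (i : ι) (a : Fin (l i)) (j : ι) (b : Fin (l j)),
      Lhat ⟨i, a⟩ ⟨j, b⟩ = ℒ ⟨i, a.succ⟩ ⟨j, b.succ⟩ - ℒ ⟨i, 0⟩ ⟨j, b.succ⟩)
    {A C : Matrix m m ℝ} {δ : ℝ} {x : ℝ → (i : ι) × Fin (l i + 1) → m → ℝ}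
    (hx : ∀ t v, HasDerivAt (fun s => x s v) (A *ᵥ x t v - δ • C *ᵥ ∑ k, ℒ v k • x t k) t)
    (t : ℝ) (q : (i : ι) × Fin (l i)) :
    HasDerivAt (fun s => clusterError (x s) q)
      (A *ᵥ clusterError (x t) q - δ • C *ᵥ ∑ p, Lhat q p • clusterError (x t) p) t := by
  refine ((hx t _).sub (hx t _)).congr_deriv ?_
  rw [clusterError, ← sum_smul_sub_sum_smul_eq_sum_smul_clusterError hblock hLhat, mulVec_sub,
    mulVec_sub, smul_sub]
  abel

theorem groupConsensus_iff_tendsto_error [DecidableEq ι] [DecidableEq m]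
    (hblock : ∀ (i : ι) (a : Fin (l i + 1)) (j : ι),
      ∑ b : Fin (l j + 1), ℒ ⟨i, a⟩ ⟨j, b⟩ = β i j)
    (hLhat : ∀ (i : ι) (a : Fin (l i)) (j : ι) (b : Fin (l j)),
      Lhat ⟨i, a⟩ ⟨j, b⟩ = ℒ ⟨i, a.succ⟩ ⟨j, b.succ⟩ - ℒ ⟨i, 0⟩ ⟨j, b.succ⟩)
    (A C : Matrix m m ℝ) (δ : ℝ) :
    (∀ x : ℝ → (i : ι) × Fin (l i + 1) → m → ℝ,
        (∀ t v, HasDerivAt (fun s => x s v) (A *ᵥ x t v - δ • C *ᵥ ∑ k, ℒ v k • x t k) t) →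
        ∀ (i : ι) (a b : Fin (l i + 1)), Tendsto (fun t => x t ⟨i, a⟩ - x t ⟨i, b⟩) atTop (𝓝 0)) ↔
      ∀ e : ℝ → ((i : ι) × Fin (l i)) × m → ℝ,
        (∀ t, HasDerivAt e ((1 ⊗ₖ A - δ • (Lhat ⊗ₖ C)) *ᵥ e t) t) → Tendsto e atTop (𝓝 0) := by
  have herror := fun x hx => (hasDerivAt_network_iff A C δ Lhat _).1
    (hasDerivAt_clusterError hblock hLhat (x := x) hx)
  constructor
  · intro hconsensus e he
    obtain ⟨x₀, hx₀⟩ := clusterError_surjective (Function.curry (e 0))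
    obtain ⟨X, hX, hX₀⟩ := exists_hasDerivAt_mulVec (1 ⊗ₖ A - δ • (ℒ ⊗ₖ C)) (Function.uncurry x₀)
    have hx := (hasDerivAt_network_iff A C δ ℒ fun t => Function.curry (X t)).2 hX
    have heq : (fun t => Function.uncurry (clusterError (Function.curry (X t)))) = e :=
      eq_of_hasDerivAt_mulVec (herror _ hx) he (by simp [hX₀, hx₀])
    rw [← heq, tendsto_uncurry_nhds_zero_iff, tendsto_clusterError_iff]
    exact hconsensus _ hx
  · intro hstable x hx
    rw [← tendsto_clusterError_iff, ← tendsto_uncurry_nhds_zero_iff]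
    exact hstable _ (herror x hx)

end ErrorDynamics

theorem stmt7_general (N n nu : ℕ) (l : Fin N → ℕ)
    (ℒ : Matrix ((i : Fin N) × Fin (l i + 1)) ((i : Fin N) × Fin (l i + 1)) ℝ)
    (β : Fin N → Fin N → ℝ)
    (hblock : ∀ (i : Fin N) (a : Fin (l i + 1)) (j : Fin N),
      ∑ b : Fin (l j + 1), ℒ ⟨i, a⟩ ⟨j, b⟩ = β i j)
    (Lhat : Matrix ((i : Fin N) × Fin (l i)) ((i : Fin N) × Fin (l i)) ℝ)
    (hLhat : ∀ (i : Fin N) (a : Fin (l i)) (j : Fin N) (b : Fin (l j)),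
      Lhat ⟨i, a⟩ ⟨j, b⟩ = ℒ ⟨i, a.succ⟩ ⟨j, b.succ⟩ - ℒ ⟨i, 0⟩ ⟨j, b.succ⟩)
    (A : Matrix (Fin n) (Fin n) ℝ) (B : Matrix (Fin n) (Fin nu) ℝ)
    (K : Matrix (Fin nu) (Fin n) ℝ) (δ : ℝ) :
    (∀ x : ℝ → ((i : Fin N) × Fin (l i + 1)) → (Fin n → ℝ),
        (∀ t v, HasDerivAt (fun s => x s v)
            (A.mulVec (x t v) - δ • (B * K).mulVec (∑ k, ℒ v k • x t k)) t) →
        ∀ (i : Fin N) (a b : Fin (l i + 1)),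
          Tendsto (fun t => x t ⟨i, a⟩ - x t ⟨i, b⟩) atTop (nhds 0)) ↔
    (∀ μ ∈ spectrum ℂ
        (((1 : Matrix ((i : Fin N) × Fin (l i)) ((i : Fin N) × Fin (l i)) ℝ) ⊗ₖ A
            - δ • (Lhat ⊗ₖ (B * K))).map Complex.ofReal),
        μ.re < 0) :=
  (groupConsensus_iff_tendsto_error hblock hLhat A (B * K) δ).trans
    Matrix.isHurwitz_map_ofReal_iff.symm

/-- Under the inter-cluster common influence condition, the multi-agent
system `ẋ = (I ⊗ A − δ ℒ ⊗ BK) x` achieves group consensus for all initial states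
(every solution satisfies `x_l − x_k → 0` for agents in the same cluster) if and only if
`I ⊗ A − δ L̂ ⊗ BK` is Hurwitz, where `L̂` is the reduced (cluster-error) matrix. -/
theorem stmt7 (N n nu : ℕ) (l : Fin N → ℕ)
    (ℒ : Matrix ((i : Fin N) × Fin (l i + 1)) ((i : Fin N) × Fin (l i + 1)) ℝ)
    (β : Fin N → Fin N → ℝ)
    (hoff : ∀ v k, v ≠ k → ℒ v k ≤ 0)
    (hrow : ∀ v, ∑ k, ℒ v k = 0)
    (hblock : ∀ (i : Fin N) (a : Fin (l i + 1)) (j : Fin N),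
      ∑ b : Fin (l j + 1), ℒ ⟨i, a⟩ ⟨j, b⟩ = β i j)
    (Lhat : Matrix ((i : Fin N) × Fin (l i)) ((i : Fin N) × Fin (l i)) ℝ)
    (hLhat : ∀ (i : Fin N) (a : Fin (l i)) (j : Fin N) (b : Fin (l j)),
      Lhat ⟨i, a⟩ ⟨j, b⟩ = ℒ ⟨i, a.succ⟩ ⟨j, b.succ⟩ - ℒ ⟨i, 0⟩ ⟨j, b.succ⟩)
    (A : Matrix (Fin n) (Fin n) ℝ) (B : Matrix (Fin n) (Fin nu) ℝ)
    (K : Matrix (Fin nu) (Fin n) ℝ) (δ : ℝ) (hδ : 0 < δ) :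
    (∀ x : ℝ → ((i : Fin N) × Fin (l i + 1)) → (Fin n → ℝ),
        (∀ t v, HasDerivAt (fun s => x s v)
            (A.mulVec (x t v) - δ • (B * K).mulVec (∑ k, ℒ v k • x t k)) t) →
        ∀ (i : Fin N) (a b : Fin (l i + 1)),
          Tendsto (fun t => x t ⟨i, a⟩ - x t ⟨i, b⟩) atTop (nhds 0)) ↔
    (∀ μ ∈ spectrum ℂ
        (((1 : Matrix ((i : Fin N) × Fin (l i)) ((i : Fin N) × Fin (l i)) ℝ) ⊗ₖ A
            - δ • (Lhat ⊗ₖ (B * K))).map Complex.ofReal),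
        μ.re < 0) :=
  stmt7_general N n nu l ℒ β hblock Lhat hLhat A B K δ
end

section
/- Under the inter-cluster common influence assumption, if the quotient graph 𝔾 contains a directed spanning tree whose root node corresponds to a subgraph G_i that itself contains a directed spanning tree, then the full graph G contains a directed spanning tree. -/
/-! Reachability of a whole cluster from a fixed root propagates along every edge `j → i` of the
quotient graph, since each node of `C_i` has an in-neighbour in `C_j`. Starting from the root
cluster, which is reachable from the root of its own spanning tree, induction along the quotient
paths from that cluster reaches every cluster, hence every node. -/

open Relation

theorem forall_fiber_reflTransGen_of_reflTransGen {α β : Type*} {r : α → α → Prop}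
    {q : β → β → Prop} {c : α → β}
    (hlift : ∀ j i, j ≠ i → q j i → ∀ v, c v = i → ∃ k, c k = j ∧ r k v)
    {x : α} {i j : β} (hi : ∀ v, c v = i → ReflTransGen r x v) (hij : ReflTransGen q i j) :
    ∀ v, c v = j → ReflTransGen r x v := by
  induction hij with
  | refl => exact hi
  | @tail b j _ hbj ih =>
    intro v hv
    by_cases hb : b = j
    · exact ih v (hv.trans hb.symm)
    · obtain ⟨k, hk, hkv⟩ := hlift b j hb hbj v hv
      exact (ih k hk).tail hkv

theorem stmt9_general (L N : ℕ) (adj : Fin L → Fin L → Prop)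
    (c : Fin L → Fin N)
    (qadj : Fin N → Fin N → Prop)
    (hci : ∀ j i, j ≠ i → qadj j i → ∀ v, c v = i → ∃ k, c k = j ∧ adj k v)
    (i0 : Fin N)
    (hroot : ∀ j, Relation.ReflTransGen qadj i0 j)
    (hsub : ∃ r, c r = i0 ∧ ∀ v, c v = i0 →
        Relation.ReflTransGen (fun a b => c a = i0 ∧ c b = i0 ∧ adj a b) r v) :
    ∃ r, ∀ v, Relation.ReflTransGen adj r v := by
  obtain ⟨r, -, hr_reach⟩ := hsub
  have hroot_cluster : ∀ v, c v = i0 → ReflTransGen adj r v := fun v hv =>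
    ReflTransGen.mono (fun _ _ h => h.2.2) _ _ (hr_reach v hv)
  exact ⟨r, fun v =>
    forall_fiber_reflTransGen_of_reflTransGen hci hroot_cluster (hroot (c v)) v rfl⟩

/-- Under the inter-cluster common influence assumption (if the quotient
graph has an edge `j → i` then every node of cluster `i` receives an edge from cluster
`j`), if the quotient graph contains a directed spanning tree rooted at a cluster `i0`
whose induced subgraph itself contains a directed spanning tree, then the full graph
contains a directed spanning tree. -/
theorem stmt9 (L N : ℕ) (adj : Fin L → Fin L → Prop)
    (c : Fin L → Fin N) (hc : Function.Surjective c)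
    (qadj : Fin N → Fin N → Prop)
    (hq : ∀ j i, qadj j i ↔ ∃ k l, c k = j ∧ c l = i ∧ adj k l)
    (hci : ∀ j i, j ≠ i → qadj j i → ∀ v, c v = i → ∃ k, c k = j ∧ adj k v)
    (i0 : Fin N)
    (hroot : ∀ j, Relation.ReflTransGen qadj i0 j)
    (hsub : ∃ r, c r = i0 ∧ ∀ v, c v = i0 →
        Relation.ReflTransGen (fun a b => c a = i0 ∧ c b = i0 ∧ adj a b) r v) :
    ∃ r, ∀ v, Relation.ReflTransGen adj r v :=
  stmt9_general L N adj c qadj hci i0 hroot hsub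
end

section
/- Under the inter-cluster common influence assumption, if the quotient graph 𝔾 is strongly connected and there exists a cluster C_i whose nodes can all be reached from a single node of G via directed paths in G (i.e., C_i is spanned by a directed tree in G), then G contains a directed spanning tree. -/
/-- Under the inter-cluster common influence assumption, if the quotient
graph is strongly connected and some cluster `i0` is spanned by a directed tree in the
full graph (a single node reaches all nodes of `C_{i0}` via directed paths in `G`), then
`G` contains a directed spanning tree. -/
theorem stmt10 (L N : ℕ) (adj : Fin L → Fin L → Prop)
    (c : Fin L → Fin N) (hc : Function.Surjective c)
    (qadj : Fin N → Fin N → Prop)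
    (hq : ∀ j i, qadj j i ↔ ∃ k l, c k = j ∧ c l = i ∧ adj k l)
    (hci : ∀ j i, j ≠ i → qadj j i → ∀ v, c v = i → ∃ k, c k = j ∧ adj k v)
    (hstrong : ∀ i j, Relation.ReflTransGen qadj i j)
    (i0 : Fin N)
    (hsub : ∃ r, ∀ v, c v = i0 → Relation.ReflTransGen adj r v) :
    ∃ r, ∀ v, Relation.ReflTransGen adj r v := by
  obtain ⟨r, hr⟩ := hsub
  refine ⟨r, fun v => ?_⟩
  have key : ∀ j, Relation.ReflTransGen qadj i0 j →
      ∀ w, c w = j → Relation.ReflTransGen adj r w := by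
    intro j h
    induction h with
    | refl => exact hr
    | tail _ hbc ih =>
      rename_i b k _
      intro w hw
      by_cases hbk : b = k
      · exact ih w (hw.trans hbk.symm)
      · obtain ⟨u, hu, hadj⟩ := hci b k hbk hbc w hw
        exact (ih u hu).tail hadj
  exact key (c v) (hstrong i0 (c v)) v rfl
end

section
/- Under the inter-cluster common influence assumption, the graph G contains cluster spanning trees with respect to the clustering C (i.e., for each cluster C_i there is a node of G reaching all nodes of C_i via directed paths in G) if and only if the minimum number of directed trees in a directed spanning forest of G equals the minimum number of directed trees in a directed spanning forest of the quotient graph 𝔾. -/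
/-!
Both minima count root covers: families of roots from which every node is reachable. The roots of
a spanning forest form one, and in a minimum root cover no root reaches another, so sending each
node to the first root reaching it is a spanning forest with as many trees.

Projecting a root cover of `G` along the clustering gives one of the quotient, so `mq ≤ m`, and
cluster roots lift a root cover of the quotient to one of `G` through common influence, so `m ≤ mq`.
If `m = mq`, a minimum root cover of `G` projects to a minimum one of the quotient, so distinct
roots lie in clusters not reaching each other. A cluster `j` in a source strongly connected
component of the quotient can only be reached from roots inside that component, hence from a
single root, which therefore reaches all of `C_j`; common influence carries this to every cluster
reachable from `j`.
-/

open Relation Function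

section RootCover

variable {V : Type*} {R : V → V → Prop}

/-- A spanning forest with `k` trees is encoded by a labelling `f` of the nodes by `Fin k` whose
every class is spanned from a root by edges inside the class. -/
def forestSizes (R : V → V → Prop) : Set ℕ :=
  {k | ∃ f : V → Fin k, ∀ t, ∃ r, f r = t ∧ ∀ v, f v = t →
    ReflTransGen (fun a b => f a = t ∧ f b = t ∧ R a b) r v}

def IsRootCover (R : V → V → Prop) {ι : Type*} (r : ι → V) : Prop :=
  ∀ v, ∃ t, ReflTransGen R (r t) v

def rootCoverSizes (R : V → V → Prop) : Set ℕ :=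
  {k | ∃ r : Fin k → V, IsRootCover R r}

lemma forestSizes_subset_rootCoverSizes : forestSizes R ⊆ rootCoverSizes R := by
  rintro k ⟨f, hf⟩
  choose r _ hr using hf
  exact ⟨r, fun v => ⟨f v, ReflTransGen.mono (fun _ _ h => h.2.2) _ _ (hr (f v) v rfl)⟩⟩

lemma IsRootCover.eq_of_reflTransGen {k : ℕ} {r : Fin k → V} (hr : IsRootCover R r)
    (hk : IsLeast (rootCoverSizes R) k) {t₁ t₂ : Fin k} (h : ReflTransGen R (r t₁) (r t₂)) :
    t₁ = t₂ := by
  by_contra hne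
  obtain _ | n := k
  · exact t₁.elim0
  have hcover : IsRootCover R (r ∘ t₂.succAbove) := by
    intro v
    obtain ⟨t, ht⟩ := hr v
    by_cases htt : t = t₂
    · obtain ⟨s, hs⟩ := Fin.exists_succAbove_eq hne
      exact ⟨s, by simpa only [comp_apply, hs] using h.trans (htt ▸ ht)⟩
    · obtain ⟨s, hs⟩ := Fin.exists_succAbove_eq htt
      exact ⟨s, by simpa only [comp_apply, hs] using ht⟩
  exact absurd (hk.2 ⟨_, hcover⟩) (by omega)

lemma IsRootCover.mem_forestSizes {k : ℕ} {r : Fin k → V} (hr : IsRootCover R r)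
    (hk : IsLeast (rootCoverSizes R) k) : k ∈ forestSizes R := by
  have hfirst : ∀ v, ∃ t, ReflTransGen R (r t) v ∧ ∀ t', ReflTransGen R (r t') v → t ≤ t' := by
    intro v
    obtain ⟨t, ht, hmin⟩ := wellFounded_lt.has_min {t | ReflTransGen R (r t) v} (hr v)
    exact ⟨t, ht, fun t' h' => not_lt.1 (hmin t' h')⟩
  choose g hg hgmin using hfirst
  have hg_eq : ∀ {v w}, ReflTransGen R (r (g v)) w → ReflTransGen R w v → g w = g v :=
    fun h₁ h₂ => le_antisymm (hgmin _ _ h₁) (hgmin _ _ ((hg _).trans h₂))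
  have hpath : ∀ v w, ReflTransGen R (r (g v)) w → ReflTransGen R w v →
      ReflTransGen (fun a b => g a = g v ∧ g b = g v ∧ R a b) (r (g v)) w := by
    intro v w h₁
    induction h₁ with
    | refl => exact fun _ => .refl
    | @tail a b h₁ hab ih =>
      intro h₂
      exact (ih (.head hab h₂)).tail ⟨hg_eq h₁ (.head hab h₂), hg_eq (h₁.tail hab) h₂, hab⟩
  refine ⟨g, fun t => ⟨r t, hr.eq_of_reflTransGen hk (hg (r t)), fun v hv => ?_⟩⟩
  subst hv
  exact hpath v v (hg v) .refl

lemma isLeast_rootCoverSizes {m : ℕ} (hm : IsLeast (forestSizes R) m) :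
    IsLeast (rootCoverSizes R) m := by
  obtain ⟨k, hk⟩ : ∃ k, IsLeast (rootCoverSizes R) k :=
    ⟨_, isLeast_csInf ⟨m, forestSizes_subset_rootCoverSizes hm.1⟩⟩
  obtain ⟨r, hr⟩ := hk.1
  obtain rfl : k = m :=
    le_antisymm (hk.2 (forestSizes_subset_rootCoverSizes hm.1)) (hm.2 (hr.mem_forestSizes hk))
  exact hk

end RootCover

lemma exists_reflTransGen_minimal {W : Type*} [Finite W] (Q : W → W → Prop) (i : W) :
    ∃ j, ReflTransGen Q j i ∧ ∀ j', ReflTransGen Q j' j → ReflTransGen Q j j' := by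
  let : Preorder W :=
    { le := ReflTransGen Q, le_refl := fun _ => .refl, le_trans := fun _ _ _ => .trans }
  obtain ⟨j, hji, hj⟩ := exists_minimal_le_of_wellFoundedLT (fun _ => True) i trivial
  exact ⟨j, hji, fun j' h => hj.2 trivial h⟩

section Quotient

variable {V W : Type*} {R : V → V → Prop} {Q : W → W → Prop} {c : V → W}

/-- The graph-level form of constant block row sums: a node of `C_i` influenced by cluster `C_j`
has an in-neighbour in `C_j`. -/
def HasCommonInfluence (c : V → W) (R : V → V → Prop) (Q : W → W → Prop) : Prop :=
  ∀ j i, j ≠ i → Q j i → ∀ v, c v = i → ∃ k, c k = j ∧ R k v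

def HasClusterRoots (c : V → W) (R : V → V → Prop) : Prop :=
  ∀ i, ∃ r, ∀ v, c v = i → ReflTransGen R r v

lemma HasCommonInfluence.exists_reflTransGen (hci : HasCommonInfluence c R Q) {j i : W}
    (h : ReflTransGen Q j i) {v : V} (hv : c v = i) : ∃ u, c u = j ∧ ReflTransGen R u v := by
  induction h generalizing v with
  | refl => exact ⟨v, hv, .refl⟩
  | @tail p i _ hpi ih =>
    by_cases hp : p = i
    · exact ih (hv.trans hp.symm)
    · obtain ⟨k, hk, hkv⟩ := hci p i hp hpi v hv
      obtain ⟨u, hu, huk⟩ := ih hk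
      exact ⟨u, hu, huk.tail hkv⟩

lemma IsRootCover.map {ι : Type*} {r : ι → V} (hr : IsRootCover R r) (hc : Surjective c)
    (hRQ : ∀ a b, R a b → Q (c a) (c b)) : IsRootCover Q (c ∘ r) := by
  intro i
  obtain ⟨v, rfl⟩ := hc i
  obtain ⟨t, ht⟩ := hr v
  exact ⟨t, ReflTransGen.lift c hRQ _ _ ht⟩

lemma IsRootCover.lift {ι : Type*} {ρ : ι → W} (hρ : IsRootCover Q ρ)
    (hci : HasCommonInfluence c R Q) {s : W → V} (hs : ∀ i v, c v = i → ReflTransGen R (s i) v) :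
    IsRootCover R (s ∘ ρ) := by
  intro v
  obtain ⟨t, ht⟩ := hρ (c v)
  obtain ⟨u, hu, huv⟩ := hci.exists_reflTransGen ht rfl
  exact ⟨t, (hs _ u hu).trans huv⟩

lemma IsRootCover.hasClusterRoots [Finite W] {ι : Type*} {r : ι → V} (hr : IsRootCover R r)
    (hc : Surjective c) (hRQ : ∀ a b, R a b → Q (c a) (c b)) (hci : HasCommonInfluence c R Q)
    (hirr : ∀ t₁ t₂, ReflTransGen Q (c (r t₁)) (c (r t₂)) → t₁ = t₂) : HasClusterRoots c R := by
  intro i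
  obtain ⟨j, hji, hj⟩ := exists_reflTransGen_minimal Q i
  obtain ⟨w, rfl⟩ := hc j
  obtain ⟨t₀, ht₀⟩ := hr w
  have hall : ∀ v, c v = c w → ReflTransGen R (r t₀) v := by
    intro v hv
    obtain ⟨t, ht⟩ := hr v
    have hproj : ReflTransGen Q (c (r t)) (c w) := hv ▸ ReflTransGen.lift c hRQ _ _ ht
    obtain rfl : t₀ = t := hirr _ _ ((ReflTransGen.lift c hRQ _ _ ht₀).trans (hj _ hproj))
    exact ht
  refine ⟨r t₀, fun v hv => ?_⟩
  obtain ⟨u, hu, huv⟩ := hci.exists_reflTransGen hji hv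
  exact (hall u hu).trans huv

end Quotient

/-- Under the inter-cluster common influence assumption, `G` contains
cluster spanning trees w.r.t. the clustering `c` iff the minimum number `m` of directed
trees in a directed spanning forest of `G` equals the minimum number `mq` for the
quotient graph. A directed spanning forest with `k` trees is encoded by an assignment
`f` of nodes to `k` classes such that each class is spanned by a directed rooted tree
using edges of the graph between nodes of that class. -/
theorem stmt11 (L N : ℕ) (adj : Fin L → Fin L → Prop)
    (c : Fin L → Fin N) (hc : Function.Surjective c)
    (qadj : Fin N → Fin N → Prop)
    (hq : ∀ j i, qadj j i ↔ ∃ k l, c k = j ∧ c l = i ∧ adj k l)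
    (hci : ∀ j i, j ≠ i → qadj j i → ∀ v, c v = i → ∃ k, c k = j ∧ adj k v)
    (m mq : ℕ)
    (hm : IsLeast {k : ℕ | ∃ f : Fin L → Fin k, ∀ t, ∃ r, f r = t ∧ ∀ v, f v = t →
        Relation.ReflTransGen (fun a b => f a = t ∧ f b = t ∧ adj a b) r v} m)
    (hmq : IsLeast {k : ℕ | ∃ f : Fin N → Fin k, ∀ t, ∃ r, f r = t ∧ ∀ v, f v = t →
        Relation.ReflTransGen (fun a b => f a = t ∧ f b = t ∧ qadj a b) r v} mq) :
    (∀ i, ∃ r, ∀ v, c v = i → Relation.ReflTransGen adj r v) ↔ m = mq := by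
  have hRQ : ∀ a b, adj a b → qadj (c a) (c b) := fun a b hab => (hq _ _).2 ⟨a, b, rfl, rfl, hab⟩
  replace hm := isLeast_rootCoverSizes (R := adj) hm
  replace hmq := isLeast_rootCoverSizes (R := qadj) hmq
  obtain ⟨r, hr⟩ := hm.1
  constructor
  · intro hcl
    choose s hs using hcl
    obtain ⟨ρ, hρ⟩ := hmq.1
    exact le_antisymm (hm.2 ⟨_, hρ.lift hci hs⟩) (hmq.2 ⟨_, hr.map hc hRQ⟩)
  · rintro rfl
    exact hr.hasClusterRoots hc hRQ hci fun _ _ h => (hr.map hc hRQ).eq_of_reflTransGen hmq h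
end

section
/- Suppose the quotient graph 𝔾 has reaches R_1,...,R_m with exclusive parts V_p = R_p \ ∪_{q≠p} R_q, and the full Laplacian satisfies the inter-cluster common influence assumption. Then G contains cluster spanning trees with respect to the clustering if and only if for each p = 1,...,m, all the nodes of ∪_{i∈V_p} C_i can be spanned by a single directed tree in G. -/
/-!
Common influence lets paths of the quotient graph lift backwards to `G`: if cluster `j` reaches
cluster `i`, every node of `C_i` is reached from some node of `C_j`. So a node spanning the
cluster of the root of a reach spans every cluster of that reach. Conversely, every cluster lies
in some reach, and the root of a reach lies in no other reach, so its cluster is exclusive.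
-/

open Relation

/-- A reach of a digraph `q` on `Fin N`: a maximal reachable set. -/
def IsReach {N : ℕ} (q : Fin N → Fin N → Prop) (S : Set (Fin N)) : Prop :=
  ∃ i, S = {j | Relation.ReflTransGen q i j} ∧
    ∀ j, ¬ ({j' | Relation.ReflTransGen q i j'} ⊂ {j' | Relation.ReflTransGen q j j'})

section Lift

variable {α β : Type*} {r : α → α → Prop} {f : α → β} {s : β → β → Prop}

theorem Relation.ReflTransGen.exists_lift
    (hlift : ∀ b b', b ≠ b' → s b b' → ∀ a', f a' = b' → ∃ a, f a = b ∧ r a a')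
    {b b' : β} (h : ReflTransGen s b b') {a' : α} (ha' : f a' = b') :
    ∃ a, f a = b ∧ ReflTransGen r a a' := by
  induction h generalizing a' with
  | refl => exact ⟨a', ha', .refl⟩
  | @tail c b' _ hcb' ih =>
    by_cases hc : c = b'
    · exact ih (hc ▸ ha')
    · obtain ⟨a'', ha'', hr⟩ := hlift c b' hc hcb' a' ha'
      obtain ⟨a, ha, hpath⟩ := ih ha''
      exact ⟨a, ha, hpath.tail hr⟩

theorem Relation.ReflTransGen.of_forall_fiber
    (hlift : ∀ b b', b ≠ b' → s b b' → ∀ a', f a' = b' → ∃ a, f a = b ∧ r a a')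
    {x : α} {b : β} (hx : ∀ a, f a = b → ReflTransGen r x a) {a' : α}
    (h : ReflTransGen s b (f a')) : ReflTransGen r x a' := by
  obtain ⟨a, ha, hpath⟩ := h.exists_lift hlift rfl
  exact (hx a ha).trans hpath

end Lift

section Reach

variable {N : ℕ}

theorem exists_isReach_mem (q : Fin N → Fin N → Prop) (i : Fin N) :
    ∃ S, IsReach q S ∧ i ∈ S := by
  let reachable : Fin N → Set (Fin N) := fun j => {j' | ReflTransGen q j j'}
  obtain ⟨j, hij, hmax⟩ := (Set.toFinite {j | i ∈ reachable j}).exists_maximalFor reachable _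
    ⟨i, .refl⟩
  exact ⟨reachable j, ⟨j, rfl, fun j' hlt => hlt.not_ge (hmax (hlt.le hij) hlt.le)⟩, hij⟩

theorem IsReach.reachableSet_eq_of_mem {q : Fin N → Fin N → Prop} {i : Fin N}
    (hmax : ∀ j, ¬ ({j' | ReflTransGen q i j'} ⊂ {j' | ReflTransGen q j j'}))
    {T : Set (Fin N)} (hT : IsReach q T) (hi : i ∈ T) : {j | ReflTransGen q i j} = T := by
  obtain ⟨t, rfl, -⟩ := hT
  have hsub : {j | ReflTransGen q i j} ⊆ {j | ReflTransGen q t j} := fun _ hj => hi.trans hj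
  by_contra hne
  exact hmax t (hsub.ssubset_of_ne hne)

end Reach

theorem stmt12_general (L N m : ℕ) (adj : Fin L → Fin L → Prop)
    (c : Fin L → Fin N)
    (qadj : Fin N → Fin N → Prop)
    (hci : ∀ j i, j ≠ i → qadj j i → ∀ v, c v = i → ∃ k, c k = j ∧ adj k v)
    (R : Fin m → Set (Fin N))
    (hreach : ∀ p, IsReach qadj (R p))
    (hinj : Function.Injective R)
    (hall : ∀ S : Set (Fin N), IsReach qadj S → ∃ p, S = R p) :
    (∀ i, ∃ r, ∀ v, c v = i → Relation.ReflTransGen adj r v) ↔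
    (∀ p, ∃ r, ∀ v, (c v ∈ R p ∧ ∀ q, q ≠ p → c v ∉ R q) →
        Relation.ReflTransGen adj r v) := by
  constructor
  · intro h p
    obtain ⟨ip, hRp, -⟩ := hreach p
    obtain ⟨r, hr⟩ := h ip
    refine ⟨r, fun v hv => .of_forall_fiber hci hr ?_⟩
    exact (hRp ▸ hv.1 : c v ∈ {j | ReflTransGen qadj ip j})
  · intro h i
    obtain ⟨S, hS, hiS⟩ := exists_isReach_mem qadj i
    obtain ⟨p, rfl⟩ := hall S hS
    obtain ⟨ip, hRp, hmax⟩ := hreach p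
    have hip : ∀ q, q ≠ p → ip ∉ R q := fun q hqp hipq =>
      hqp (hinj (hRp.trans (IsReach.reachableSet_eq_of_mem hmax (hreach q) hipq)).symm)
    obtain ⟨r, hr⟩ := h p
    have hroot : ∀ k, c k = ip → ReflTransGen adj r k := fun k hk =>
      hr k ⟨hRp ▸ hk ▸ ReflTransGen.refl, hk ▸ hip⟩
    refine ⟨r, fun v hv => .of_forall_fiber hci hroot ?_⟩
    exact (hv ▸ hRp ▸ hiS : c v ∈ {j | ReflTransGen qadj ip j})

/-- Suppose the quotient graph has reaches `R 1, ..., R m` with exclusive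
parts `V p = R p \ ⋃_{q ≠ p} R q`, and the full Laplacian satisfies the inter-cluster
common influence assumption. Then `G` contains cluster spanning trees w.r.t. the
clustering iff for each `p`, all the nodes of `⋃_{i ∈ V p} C_i` can be spanned by a
single directed tree in `G`. -/
theorem stmt12 (L N m : ℕ) (adj : Fin L → Fin L → Prop)
    (c : Fin L → Fin N) (hc : Function.Surjective c)
    (qadj : Fin N → Fin N → Prop)
    (hq : ∀ j i, qadj j i ↔ ∃ k l, c k = j ∧ c l = i ∧ adj k l)
    (hci : ∀ j i, j ≠ i → qadj j i → ∀ v, c v = i → ∃ k, c k = j ∧ adj k v)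
    (R : Fin m → Set (Fin N))
    (hreach : ∀ p, IsReach qadj (R p))
    (hinj : Function.Injective R)
    (hall : ∀ S : Set (Fin N), IsReach qadj S → ∃ p, S = R p) :
    (∀ i, ∃ r, ∀ v, c v = i → Relation.ReflTransGen adj r v) ↔
    (∀ p, ∃ r, ∀ v, (c v ∈ R p ∧ ∀ q, q ≠ p → c v ∉ R q) →
        Relation.ReflTransGen adj r v) :=
  stmt12_general L N m adj c qadj hci R hreach hinj hall
end

section
/- Let L ∈ ℝ^{L×L} be a Laplacian of a nonnegative digraph written in block lower-triangular form L = [[L_R, 0],[L_{FR}, L_F]] with L_F nonsingular. Then the matrix −L_F^{−1} L_{FR} is row stochastic: it is entrywise nonnegative and its rows sum to 1. -/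
open Matrix

/-- Minimum principle: strictly row-sum-positive Z-matrix maps x with A x ≥ 0 only if x ≥ 0. -/
lemma minpr {n : ℕ} (A : Matrix (Fin n) (Fin n) ℝ)
    (hoff : ∀ i j, i ≠ j → A i j ≤ 0)
    (hrow : ∀ i, 0 < ∑ k, A i k)
    (x : Fin n → ℝ) (hc : ∀ i, 0 ≤ A.mulVec x i) :
    ∀ i, 0 ≤ x i := by
  by_contra h
  push_neg at h
  obtain ⟨j, hj⟩ := h
  obtain ⟨i0, -, hmin⟩ := Finset.exists_min_image Finset.univ x ⟨j, Finset.mem_univ j⟩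
  have hx0 : x i0 < 0 := lt_of_le_of_lt (hmin j (Finset.mem_univ j)) hj
  have h1 : A.mulVec x i0 ≤ x i0 * ∑ k, A i0 k := by
    rw [Matrix.mulVec, dotProduct, Finset.mul_sum]
    apply Finset.sum_le_sum
    intro k _
    rcases eq_or_ne k i0 with hk | hk
    · subst hk; rw [mul_comm]
    · have h3 := hoff i0 k (Ne.symm hk)
      have := mul_le_mul_of_nonpos_left (hmin k (Finset.mem_univ k)) h3
      calc A i0 k * x k ≤ A i0 k * x i0 := this
        _ = x i0 * A i0 k := mul_comm _ _
  have h2 : x i0 * ∑ k, A i0 k < 0 := mul_neg_of_neg_of_pos hx0 (hrow i0)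
  exact absurd (hc i0) (by linarith)

/-- If `ℒ` is a Laplacian of a nonnegative digraph in block
lower-triangular form `[[L_R, 0],[L_FR, L_F]]` with `L_F` nonsingular, then
`−L_F⁻¹ L_FR` is row stochastic: entrywise nonnegative with rows summing to `1`. -/
theorem stmt14 (r f : ℕ)
    (ℒ : Matrix (Fin r ⊕ Fin f) (Fin r ⊕ Fin f) ℝ)
    (hoff : ∀ v u, v ≠ u → ℒ v u ≤ 0)
    (hrow : ∀ v, ∑ u, ℒ v u = 0)
    (htri : ∀ (a : Fin r) (b : Fin f), ℒ (Sum.inl a) (Sum.inr b) = 0)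
    (LF : Matrix (Fin f) (Fin f) ℝ) (hLF : ∀ a b, LF a b = ℒ (Sum.inr a) (Sum.inr b))
    (LFR : Matrix (Fin f) (Fin r) ℝ) (hLFR : ∀ a b, LFR a b = ℒ (Sum.inr a) (Sum.inl b))
    (hinv : IsUnit LF.det) :
    (∀ a b, 0 ≤ (-(LF⁻¹ * LFR)) a b) ∧
    (-(LF⁻¹ * LFR)).mulVec (fun _ => (1 : ℝ)) = fun _ => (1 : ℝ) := by
  -- basic sign facts
  have hLFRle : ∀ i b, LFR i b ≤ 0 := fun i b => by
    rw [hLFR]; exact hoff _ _ (by simp)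
  have hLFoff : ∀ i j : Fin f, i ≠ j → LF i j ≤ 0 := fun i j hij => by
    rw [hLF]; exact hoff _ _ (by simpa using hij)
  have hrLF : ∀ i, (0:ℝ) ≤ ∑ k, LF i k := by
    intro i
    have hs := hrow (Sum.inr i)
    rw [Fintype.sum_sum_type] at hs
    have : ∑ k, LF i k = - ∑ b, LFR i b := by
      simp only [hLF, hLFR]; linarith
    rw [this]
    have : ∑ b, LFR i b ≤ 0 := Finset.sum_nonpos fun b _ => hLFRle i b
    linarith
  constructor
  · -- nonnegativity via perturbation
    intro a b
    set g : ℝ → ℝ := fun ε =>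
      (((LF + ε • (1 : Matrix (Fin f) (Fin f) ℝ)).det)⁻¹) *
        (((LF + ε • (1 : Matrix (Fin f) (Fin f) ℝ)).adjugate * (-LFR)) a b) with hg
    have hdet0 : LF.det ≠ 0 := hinv.ne_zero
    have hcontA : Continuous (fun ε : ℝ => LF + ε • (1 : Matrix (Fin f) (Fin f) ℝ)) :=
      continuous_const.add (continuous_id.smul continuous_const)
    have hcontdet : Continuous (fun ε : ℝ => (LF + ε • (1 : Matrix (Fin f) (Fin f) ℝ)).det) :=
      hcontA.matrix_det
    have hcontadj : Continuous
        (fun ε : ℝ => ((LF + ε • (1 : Matrix (Fin f) (Fin f) ℝ)).adjugate * (-LFR)) a b) :=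
      (hcontA.matrix_adjugate.matrix_mul continuous_const).matrix_elem a b
    have hdetat0 : (fun ε : ℝ => (LF + ε • (1 : Matrix (Fin f) (Fin f) ℝ)).det) 0 = LF.det := by
      simp
    have hcg : ContinuousAt g 0 := by
      apply ContinuousAt.mul
      · apply ContinuousAt.inv₀ hcontdet.continuousAt
        simpa using hdet0
      · exact hcontadj.continuousAt
    -- eventually det ≠ 0 near 0
    have hev : ∀ᶠ ε in nhdsWithin (0:ℝ) (Set.Ioi 0), 0 ≤ g ε := by
      have hne : ∀ᶠ ε in nhdsWithin (0:ℝ) (Set.Ioi 0),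
          (LF + ε • (1 : Matrix (Fin f) (Fin f) ℝ)).det ≠ 0 := by
        apply Filter.Eventually.filter_mono nhdsWithin_le_nhds
        have : ContinuousAt (fun ε : ℝ => (LF + ε • (1 : Matrix (Fin f) (Fin f) ℝ)).det) 0 :=
          hcontdet.continuousAt
        have := this.eventually_ne (y := 0) (by simpa using hdet0)
        simpa using this
      have hpos : ∀ᶠ ε in nhdsWithin (0:ℝ) (Set.Ioi 0), (0:ℝ) < ε :=
        eventually_mem_nhdsWithin.mono (fun ε hε => hε)
      filter_upwards [hne, hpos] with ε hεne hεpos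
      set A := LF + ε • (1 : Matrix (Fin f) (Fin f) ℝ) with hA
      have hAinv : IsUnit A.det := isUnit_iff_ne_zero.mpr hεne
      have hAoff : ∀ i j : Fin f, i ≠ j → A i j ≤ 0 := by
        intro i j hij
        simp only [hA, Matrix.add_apply, Matrix.smul_apply, Matrix.one_apply_ne hij,
          smul_zero, add_zero]
        exact hLFoff i j hij
      have hArow : ∀ i, (0:ℝ) < ∑ k, A i k := by
        intro i
        have : ∑ k, A i k = (∑ k, LF i k) + ε := by
          simp [hA, Finset.sum_add_distrib, Matrix.one_apply, smul_eq_mul]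
        rw [this]
        have := hrLF i
        linarith
      -- x := A⁻¹ applied to column b of -LFR
      set x : Fin f → ℝ := A⁻¹.mulVec (fun k => -LFR k b) with hx
      have hAx : A.mulVec x = fun k => -LFR k b := by
        rw [hx, Matrix.mulVec_mulVec, Matrix.mul_nonsing_inv A hAinv, Matrix.one_mulVec]
      have hxnn : ∀ i, 0 ≤ x i := by
        apply minpr A hAoff hArow
        intro i
        rw [hAx]
        simpa using hLFRle i b
      have hxa : x a = g ε := by
        rw [hg]
        simp only [hx]
        rw [Matrix.inv_def, Ring.inverse_eq_inv']
        show ((A.det⁻¹ • A.adjugate).mulVec (fun k => -LFR k b)) a = _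
        rw [Matrix.smul_mulVec]
        simp only [Pi.smul_apply, smul_eq_mul]
        congr 1
      rw [← hxa]
      exact hxnn a
    -- pass to the limit
    have hlim : Filter.Tendsto g (nhdsWithin (0:ℝ) (Set.Ioi 0)) (nhds (g 0)) :=
      (hcg.tendsto).mono_left nhdsWithin_le_nhds
    have h0 : 0 ≤ g 0 := ge_of_tendsto hlim hev
    have hg0 : g 0 = (-(LF⁻¹ * LFR)) a b := by
      rw [hg]
      simp only [zero_smul, add_zero]
      rw [Matrix.inv_def, Ring.inverse_eq_inv']
      simp only [Matrix.mul_apply, Matrix.neg_apply, Matrix.smul_apply, smul_eq_mul,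
        Finset.mul_sum, ← Finset.sum_neg_distrib]
      apply Finset.sum_congr rfl
      intro k _
      ring
    rw [← hg0]
    exact h0
  · -- row sums
    have hones : LFR.mulVec (fun _ => (1:ℝ)) = fun i => -(LF.mulVec (fun _ => (1:ℝ)) i) := by
      funext i
      have hs := hrow (Sum.inr i)
      rw [Fintype.sum_sum_type] at hs
      simp only [Matrix.mulVec, dotProduct, mul_one]
      simp only [hLF, hLFR]
      linarith [hs]
    have : (-(LF⁻¹ * LFR)).mulVec (fun _ => (1:ℝ))
        = (LF⁻¹ * LF).mulVec (fun _ => (1:ℝ)) := by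
      rw [Matrix.neg_mulVec, ← Matrix.mulVec_mulVec, hones, ← Matrix.mulVec_mulVec]
      funext i
      simp only [Matrix.mulVec_mulVec]
      have : (fun i => -(LF *ᵥ fun _ => (1:ℝ)) i) = -(LF *ᵥ fun _ => (1:ℝ)) := rfl
      rw [this, Matrix.mulVec_neg, Matrix.mulVec_mulVec]
      simp
    rw [this, Matrix.nonsing_inv_mul LF hinv, Matrix.one_mulVec]
end

section
/- Let L be a Laplacian of a nonnegative digraph in block lower-triangular form [[L_R, 0],[L_{FR}, L_F]] with L_R = blkdiag(L_1,...,L_m), each L_p having a simple zero eigenvalue with right/left eigenvectors μ_p, ν_p (ν_p^T μ_p = 1), and L_F having all eigenvalues with positive real part. Define Ξ = blkdiag(μ_1ν_1^T,...,μ_mν_m^T). Then L_R Ξ = 0 and Ξ² = Ξ, and the vector [Ξ; −L_F^{−1}L_{FR}Ξ] z lies in the kernel of L for every z; equivalently, the columns of [Ξ; −L_F^{−1}L_{FR}Ξ] span the kernel of L, which has dimension m. -/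
open Matrix

/-- For a digraph Laplacian `ℒ` in block lower-triangular form
`[[L_R, 0],[L_FR, L_F]]` with `L_R = blkdiag(L_1,...,L_m)`, each `L_p` having a simple
zero eigenvalue with right/left eigenvectors `μ p`, `ν p` (normalized `νᵀμ = 1`), and
`L_F` having all eigenvalues with positive real part, the block-diagonal projection
`Ξ = blkdiag(μ_1ν_1ᵀ,...,μ_mν_mᵀ)` satisfies `L_R Ξ = 0` and `Ξ² = Ξ`, and the columns
of the stacked matrix `[Ξ; −L_F⁻¹ L_FR Ξ]` span the kernel of `ℒ`, which has
dimension `m`. -/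
theorem stmt18 (m f : ℕ) (k : Fin m → ℕ)
    (ℒ : Matrix (((p : Fin m) × Fin (k p + 1)) ⊕ Fin f)
        (((p : Fin m) × Fin (k p + 1)) ⊕ Fin f) ℝ)
    (hoff : ∀ v u, v ≠ u → ℒ v u ≤ 0)
    (hrow : ∀ v, ∑ u, ℒ v u = 0)
    (hblkdiag : ∀ (p : Fin m) (a : Fin (k p + 1)) (q : Fin m) (b : Fin (k q + 1)),
      p ≠ q → ℒ (Sum.inl ⟨p, a⟩) (Sum.inl ⟨q, b⟩) = 0)
    (htri : ∀ (p : Fin m) (a : Fin (k p + 1)) (b : Fin f),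
      ℒ (Sum.inl ⟨p, a⟩) (Sum.inr b) = 0)
    (Lp : (p : Fin m) → Matrix (Fin (k p + 1)) (Fin (k p + 1)) ℝ)
    (hLp : ∀ p a b, Lp p a b = ℒ (Sum.inl ⟨p, a⟩) (Sum.inl ⟨p, b⟩))
    (LR : Matrix ((p : Fin m) × Fin (k p + 1)) ((p : Fin m) × Fin (k p + 1)) ℝ)
    (hLR : ∀ v u, LR v u = ℒ (Sum.inl v) (Sum.inl u))
    (LF : Matrix (Fin f) (Fin f) ℝ) (hLF : ∀ a b, LF a b = ℒ (Sum.inr a) (Sum.inr b))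
    (LFR : Matrix (Fin f) ((p : Fin m) × Fin (k p + 1)) ℝ)
    (hLFR : ∀ a v, LFR a v = ℒ (Sum.inr a) (Sum.inl v))
    (μv : (p : Fin m) → Fin (k p + 1) → ℝ) (ν : (p : Fin m) → Fin (k p + 1) → ℝ)
    (hμ : ∀ p, (Lp p).mulVec (μv p) = 0)
    (hν : ∀ p, (ν p) ᵥ* (Lp p) = 0)
    (hnorm : ∀ p, (ν p) ⬝ᵥ (μv p) = 1)
    -- simple zero eigenvalue: the kernel of each `L_p` is spanned by `μv p`
    (hsimple : ∀ p, (Lp p).charpoly.rootMultiplicity 0 = 1)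
    (hker : ∀ p x, (Lp p).mulVec x = 0 → ∃ t : ℝ, x = t • μv p)
    (hLFspec : ∀ z ∈ spectrum ℂ (LF.map Complex.ofReal), 0 < z.re)
    (Ξ : Matrix ((p : Fin m) × Fin (k p + 1)) ((p : Fin m) × Fin (k p + 1)) ℝ)
    (hΞ : ∀ (p : Fin m) (a : Fin (k p + 1)) (q : Fin m) (b : Fin (k q + 1)),
      Ξ ⟨p, a⟩ ⟨q, b⟩ = if p = q then μv p a * ν q b else 0) :
    LR * Ξ = 0 ∧ Ξ * Ξ = Ξ ∧
    LinearMap.ker ℒ.mulVecLin =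
      LinearMap.range (Matrix.mulVecLin (Matrix.of fun v j =>
        Sum.elim (fun i => Ξ i j) (fun b => (-(LF⁻¹ * LFR * Ξ)) b j) v)) ∧
    Module.finrank ℝ (LinearMap.ker ℒ.mulVecLin) = m := by
  classical
  have sumS : ∀ (g : ((p : Fin m) × Fin (k p + 1)) → ℝ),
      ∑ x, g x = ∑ p, ∑ a, g ⟨p, a⟩ := fun g => by
    rw [← Finset.univ_sigma_univ, Finset.sum_sigma]
  -- LR is block diagonal with blocks Lp
  have hLRdiag : ∀ (p : Fin m) (a b : Fin (k p + 1)), LR ⟨p, a⟩ ⟨p, b⟩ = Lp p a b := by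
    intro p a b; rw [hLR, hLp]
  have hLRoff : ∀ (p : Fin m) (a : Fin (k p + 1)) (q : Fin m) (b : Fin (k q + 1)),
      p ≠ q → LR ⟨p, a⟩ ⟨q, b⟩ = 0 := by
    intro p a q b h; rw [hLR, hblkdiag p a q b h]
  -- Part 1 : LR * Ξ = 0
  have h1 : LR * Ξ = 0 := by
    ext ⟨p, a⟩ ⟨q, b⟩
    simp only [Matrix.mul_apply, Matrix.zero_apply]
    rw [sumS fun x => LR ⟨p, a⟩ x * Ξ x ⟨q, b⟩]
    rw [Finset.sum_eq_single p]
    · by_cases hpq : p = q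
      · subst hpq
        have hc : ∀ c, LR ⟨p, a⟩ ⟨p, c⟩ * Ξ ⟨p, c⟩ ⟨p, b⟩
            = (Lp p a c * μv p c) * ν p b := by
          intro c; rw [hLRdiag, hΞ, if_pos rfl]; ring
        rw [Finset.sum_congr rfl fun c _ => hc c, ← Finset.sum_mul,
          show (∑ c, Lp p a c * μv p c) = 0 from congrFun (hμ p) a, zero_mul]
      · apply Finset.sum_eq_zero; intro c _
        rw [hΞ p c q b, if_neg hpq, mul_zero]
    · intro r _ hr
      apply Finset.sum_eq_zero; intro c _
      rw [hLRoff p a r c (fun h => hr h.symm), zero_mul]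
    · intro h; exact absurd (Finset.mem_univ p) h
  -- Part 2 : Ξ * Ξ = Ξ
  have h2 : Ξ * Ξ = Ξ := by
    ext ⟨p, a⟩ ⟨q, b⟩
    simp only [Matrix.mul_apply]
    rw [sumS fun x => Ξ ⟨p, a⟩ x * Ξ x ⟨q, b⟩]
    rw [Finset.sum_eq_single p]
    · by_cases hpq : p = q
      · subst hpq
        have hc : ∀ c, Ξ ⟨p, a⟩ ⟨p, c⟩ * Ξ ⟨p, c⟩ ⟨p, b⟩
            = (μv p a * ν p b) * (ν p c * μv p c) := by
          intro c; rw [hΞ p a p c, if_pos rfl, hΞ p c p b, if_pos rfl]; ring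
        rw [Finset.sum_congr rfl fun c _ => hc c, ← Finset.mul_sum,
          show (∑ c, ν p c * μv p c) = 1 from hnorm p, mul_one, hΞ, if_pos rfl]
      · rw [hΞ p a q b, if_neg hpq]
        apply Finset.sum_eq_zero; intro c _
        rw [hΞ p c q b, if_neg hpq, mul_zero]
    · intro r _ hr
      apply Finset.sum_eq_zero; intro c _
      rw [hΞ p a r c, if_neg (fun h => hr h.symm), zero_mul]
    · intro h; exact absurd (Finset.mem_univ p) h
  -- LF is invertible
  have hLFdet : IsUnit LF.det := by
    have h0 : (0 : ℂ) ∉ spectrum ℂ (LF.map Complex.ofReal) := by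
      intro h
      exact lt_irrefl (0:ℝ) (by simpa using hLFspec 0 h)
    rw [spectrum.zero_mem_iff, not_not, Matrix.isUnit_iff_isUnit_det] at h0
    have hdet : (LF.map Complex.ofReal).det = Complex.ofReal LF.det := by
      rw [show LF.map Complex.ofReal = Complex.ofRealHom.mapMatrix LF from rfl,
        ← RingHom.map_det]
      rfl
    rw [hdet, isUnit_iff_ne_zero, Complex.ofReal_ne_zero] at h0
    exact isUnit_iff_ne_zero.mpr h0
  -- the stacked matrix
  set M : Matrix ((((p : Fin m) × Fin (k p + 1)) ⊕ Fin f)) ((p : Fin m) × Fin (k p + 1)) ℝ :=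
    Matrix.of fun v j =>
      Sum.elim (fun i => Ξ i j) (fun b => (-(LF⁻¹ * LFR * Ξ)) b j) v with hM
  have hMinl : ∀ (z : ((p : Fin m) × Fin (k p + 1)) → ℝ) i,
      M.mulVec z (Sum.inl i) = Ξ.mulVec z i := fun z i => rfl
  have hMinr : ∀ (z : ((p : Fin m) × Fin (k p + 1)) → ℝ) b,
      M.mulVec z (Sum.inr b) = (-(LF⁻¹ * LFR * Ξ)).mulVec z b := fun z b => rfl
  -- key computation for Ξ.mulVec
  have hΞmv : ∀ (w : ((p : Fin m) × Fin (k p + 1)) → ℝ) p a,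
      Ξ.mulVec w ⟨p, a⟩ = μv p a * ∑ b, ν p b * w ⟨p, b⟩ := by
    intro w p a
    show ∑ x, Ξ ⟨p, a⟩ x * w x = _
    rw [sumS fun x => Ξ ⟨p, a⟩ x * w x]
    rw [Finset.sum_eq_single p]
    · rw [Finset.mul_sum]
      apply Finset.sum_congr rfl; intro b _
      rw [hΞ, if_pos rfl]; ring
    · intro r _ hr
      apply Finset.sum_eq_zero; intro c _
      rw [hΞ p a r c, if_neg (fun h => hr h.symm), zero_mul]
    · intro h; exact absurd (Finset.mem_univ p) h
  -- component decomposition of ℒ.mulVec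
  have hLtop : ∀ (x : ((((p : Fin m) × Fin (k p + 1)) ⊕ Fin f)) → ℝ) p a,
      ℒ.mulVec x (Sum.inl ⟨p, a⟩)
        = (Lp p).mulVec (fun b => x (Sum.inl ⟨p, b⟩)) a := by
    intro x p a
    show ∑ u, ℒ (Sum.inl ⟨p, a⟩) u * x u = _
    rw [Fintype.sum_sum_type]
    have h2' : ∑ b : Fin f, ℒ (Sum.inl ⟨p, a⟩) (Sum.inr b) * x (Sum.inr b) = 0 := by
      apply Finset.sum_eq_zero; intro b _; rw [htri, zero_mul]
    rw [h2', add_zero]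
    rw [sumS fun j => ℒ (Sum.inl ⟨p, a⟩) (Sum.inl j) * x (Sum.inl j)]
    rw [Finset.sum_eq_single p]
    · show _ = ∑ b, Lp p a b * x (Sum.inl ⟨p, b⟩)
      apply Finset.sum_congr rfl; intro b _; rw [hLp]
    · intro r _ hr
      apply Finset.sum_eq_zero; intro c _
      rw [hblkdiag p a r c (fun h => hr h.symm), zero_mul]
    · intro h; exact absurd (Finset.mem_univ p) h
  have hLbot : ∀ (x : ((((p : Fin m) × Fin (k p + 1)) ⊕ Fin f)) → ℝ) b,
      ℒ.mulVec x (Sum.inr b)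
        = LFR.mulVec (fun i => x (Sum.inl i)) b + LF.mulVec (fun c => x (Sum.inr c)) b := by
    intro x b
    show ∑ u, ℒ (Sum.inr b) u * x u = _
    rw [Fintype.sum_sum_type]
    simp only [Matrix.mulVec, dotProduct, hLFR, hLF]
  -- range M ⊆ ker ℒ
  have hMker : ∀ z, ℒ.mulVec (M.mulVec z) = 0 := by
    intro z
    funext u
    rcases u with ⟨p, a⟩ | b
    · show ℒ.mulVec (M.mulVec z) (Sum.inl ⟨p, a⟩) = (0:ℝ)
      rw [hLtop]
      have hre : (fun b => M.mulVec z (Sum.inl ⟨p, b⟩)) = fun b => Ξ.mulVec z ⟨p, b⟩ := by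
        funext b; exact hMinl z ⟨p, b⟩
      rw [hre]
      have hLRz : LR.mulVec (Ξ.mulVec z) = 0 := by
        rw [Matrix.mulVec_mulVec, h1, Matrix.zero_mulVec]
      have hz : (∑ j, LR ⟨p, a⟩ j * Ξ.mulVec z j) = 0 := by
        have := congrFun hLRz ⟨p, a⟩
        exact this
      rw [show ((Lp p).mulVec (fun b => Ξ.mulVec z ⟨p, b⟩) a)
          = ∑ j, LR ⟨p, a⟩ j * Ξ.mulVec z j from ?_, hz]
      rw [sumS fun j => LR ⟨p, a⟩ j * Ξ.mulVec z j]
      rw [Finset.sum_eq_single p]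
      · show ∑ b, Lp p a b * Ξ.mulVec z ⟨p, b⟩ = _
        apply Finset.sum_congr rfl; intro b _; rw [hLRdiag]
      · intro r _ hr
        apply Finset.sum_eq_zero; intro c _
        rw [hLRoff p a r c (fun h => hr h.symm), zero_mul]
      · intro h; exact absurd (Finset.mem_univ p) h
    · show ℒ.mulVec (M.mulVec z) (Sum.inr b) = (0:ℝ)
      rw [hLbot]
      have htop : (fun i => M.mulVec z (Sum.inl i)) = Ξ.mulVec z := by
        funext i; exact hMinl z i
      have hbot : (fun c => M.mulVec z (Sum.inr c)) = (-(LF⁻¹ * LFR * Ξ)).mulVec z := by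
        funext c; exact hMinr z c
      rw [htop, hbot]
      have hcancel : LF.mulVec ((-(LF⁻¹ * LFR * Ξ)).mulVec z) = -(LFR.mulVec (Ξ.mulVec z)) := by
        rw [Matrix.mulVec_mulVec]
        have : LF * -(LF⁻¹ * LFR * Ξ) = -(LFR * Ξ) := by
          rw [Matrix.mul_neg]
          congr 1
          rw [← Matrix.mul_assoc, ← Matrix.mul_assoc, Matrix.mul_nonsing_inv LF hLFdet,
            Matrix.one_mul]
        rw [this, Matrix.neg_mulVec, Matrix.mulVec_mulVec]
      rw [hcancel]
      simp
  -- ker ℒ ⊆ range M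
  have hkerM : ∀ x, ℒ.mulVec x = 0 → ∃ z, M.mulVec z = x := by
    intro x hx
    set xR : ((p : Fin m) × Fin (k p + 1)) → ℝ := fun i => x (Sum.inl i) with hxR
    have hblk0 : ∀ p, (Lp p).mulVec (fun b => xR ⟨p, b⟩) = 0 := by
      intro p
      funext a
      show (Lp p).mulVec (fun b => xR ⟨p, b⟩) a = (0:ℝ)
      have := congrFun hx (Sum.inl ⟨p, a⟩)
      rw [hLtop] at this
      exact this
    choose t ht using fun p => hker p (fun b => xR ⟨p, b⟩) (hblk0 p)
    have hfix : Ξ.mulVec xR = xR := by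
      funext i
      rcases i with ⟨p, a⟩
      rw [hΞmv]
      have hxpb : ∀ b, xR ⟨p, b⟩ = t p * μv p b := fun b => congrFun (ht p) b
      have hs : ∑ b, ν p b * xR ⟨p, b⟩ = t p := by
        calc ∑ b, ν p b * xR ⟨p, b⟩ = t p * ∑ b, ν p b * μv p b := by
              rw [Finset.mul_sum]
              apply Finset.sum_congr rfl; intro b _; rw [hxpb]; ring
          _ = t p := by rw [show (∑ b, ν p b * μv p b) = 1 from hnorm p, mul_one]
      rw [hs, hxpb a]; ring
    refine ⟨xR, ?_⟩
    funext u
    rcases u with i | b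
    · rw [hMinl, hfix]
    · rw [hMinr]
      have hxF : (fun c => x (Sum.inr c)) = -(LF⁻¹.mulVec (LFR.mulVec xR)) := by
        have hLFx : LF.mulVec (fun c => x (Sum.inr c)) = -(LFR.mulVec xR) := by
          funext c
          have hc := congrFun hx (Sum.inr c)
          rw [hLbot] at hc
          have hc' : LFR.mulVec xR c + LF.mulVec (fun c => x (Sum.inr c)) c = 0 := hc
          simp only [Pi.neg_apply]
          linarith
        have h' := congrArg (fun v => LF⁻¹.mulVec v) hLFx
        simp only [Matrix.mulVec_mulVec] at h'
        rw [Matrix.nonsing_inv_mul LF hLFdet, Matrix.one_mulVec] at h'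
        rw [h', Matrix.mulVec_neg]
      have hfin : (-(LF⁻¹ * LFR * Ξ)).mulVec xR = fun c => x (Sum.inr c) := by
        rw [Matrix.neg_mulVec, ← Matrix.mulVec_mulVec (v := xR) (M := LF⁻¹ * LFR) (N := Ξ),
          hfix, hxF, ← Matrix.mulVec_mulVec]
      exact congrFun hfin b
  have h3 : LinearMap.ker ℒ.mulVecLin = LinearMap.range M.mulVecLin := by
    ext x
    simp only [LinearMap.mem_ker, LinearMap.mem_range, Matrix.mulVecLin_apply]
    constructor
    · exact hkerM x
    · rintro ⟨z, rfl⟩; exact hMker z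
  -- dimension count
  set N : Matrix ((p : Fin m) × Fin (k p + 1)) (Fin m) ℝ :=
    Matrix.of (fun i q => if i.1 = q then μv i.1 i.2 else 0) with hN
  have hNmv : ∀ (t : Fin m → ℝ) p a, N.mulVec t ⟨p, a⟩ = μv p a * t p := by
    intro t p a
    show ∑ q, (if p = q then μv p a else 0) * t q = _
    rw [Finset.sum_eq_single p]
    · rw [if_pos rfl]
    · intro q _ hq; rw [if_neg (fun h => hq h.symm), zero_mul]
    · intro h; exact absurd (Finset.mem_univ p) h
  have hψval : ∀ (t : Fin m → ℝ) p a, Ξ.mulVec (N.mulVec t) ⟨p, a⟩ = t p * μv p a := by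
    intro t p a
    rw [hΞmv]
    have hs : ∑ b, ν p b * N.mulVec t ⟨p, b⟩ = t p := by
      calc ∑ b, ν p b * N.mulVec t ⟨p, b⟩ = t p * ∑ b, ν p b * μv p b := by
            rw [Finset.mul_sum]
            apply Finset.sum_congr rfl; intro b _; rw [hNmv]; ring
        _ = t p := by rw [show (∑ b, ν p b * μv p b) = 1 from hnorm p, mul_one]
    rw [hs]; ring
  set ψ : (Fin m → ℝ) →ₗ[ℝ] ((((p : Fin m) × Fin (k p + 1)) ⊕ Fin f) → ℝ) :=
    M.mulVecLin ∘ₗ N.mulVecLin with hψ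
  have hψapp : ∀ t, ψ t = M.mulVec (N.mulVec t) := fun t => rfl
  have hψinj : Function.Injective ψ := by
    apply (injective_iff_map_eq_zero ψ).mpr
    intro t ht
    funext p
    show t p = (0:ℝ)
    have h0 : ∀ a, t p * μv p a = 0 := by
      intro a
      have h := congrFun ht (Sum.inl ⟨p, a⟩)
      rw [hψapp, hMinl, hψval] at h
      exact h
    calc t p = t p * ∑ a, ν p a * μv p a := by
          rw [show (∑ a, ν p a * μv p a) = 1 from hnorm p, mul_one]
      _ = ∑ a, ν p a * (t p * μv p a) := by
          rw [Finset.mul_sum]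
          apply Finset.sum_congr rfl; intro a _; ring
      _ = 0 := by simp [h0]
  have hrange : LinearMap.range ψ = LinearMap.range M.mulVecLin := by
    apply le_antisymm
    · rintro x ⟨t, rfl⟩
      exact ⟨N.mulVec t, rfl⟩
    · rintro x ⟨z, rfl⟩
      refine ⟨fun p => ∑ b, ν p b * z ⟨p, b⟩, ?_⟩
      have hΞeq : Ξ.mulVec (N.mulVec (fun p => ∑ b, ν p b * z ⟨p, b⟩)) = Ξ.mulVec z := by
        funext i; rcases i with ⟨p, a⟩
        rw [hψval, hΞmv]; ring
      show M.mulVec _ = M.mulVec z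
      funext u
      rcases u with i | b
      · rw [hMinl, hMinl]; exact congrFun hΞeq i
      · rw [hMinr, hMinr,
          show (-(LF⁻¹ * LFR * Ξ)) = -(LF⁻¹ * LFR) * Ξ from by
            rw [Matrix.neg_mul, Matrix.mul_assoc],
          ← Matrix.mulVec_mulVec, ← Matrix.mulVec_mulVec]
        exact congrFun (congrArg (fun w => (-(LF⁻¹ * LFR)) *ᵥ w) hΞeq) b
  have h4 : Module.finrank ℝ (LinearMap.ker ℒ.mulVecLin) = m := by
    rw [h3, ← hrange, LinearMap.finrank_range_of_inj hψinj,
      Module.finrank_fintype_fun_eq_card, Fintype.card_fin]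
  exact ⟨h1, h2, h3, h4⟩
end
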